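/- arXiv:math/0101199 — 2 statements merged into one kernel-verified Lean document; each statement's English description precedes it below -/
import Mathlib

section
/- Let M be a complete metric space. If there exists an isometric shift on the Banach space C*(M) of bounded continuous K-valued functions on M (with supremum norm), then M is separable. -/
open LinearMap

section Aux
variable {𝕜 : Type*} [RCLike 𝕜] {E : Type*} [NormedAddCommGroup E] [NormedSpace 𝕜 E]

lemma pow_norm (T : E →ₗᵢ[𝕜] E) (n : ℕ) : ∀ f : E, ‖(T.toLinearMap ^ n) f‖ = ‖f‖ := by
  induction n with
  | zero => simp
  | succ m ih =>
    intro f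
    rw [pow_succ', Module.End.mul_apply]
    exact (T.norm_map _).trans (ih f)

lemma pow_inj (T : E →ₗᵢ[𝕜] E) (n : ℕ) : Function.Injective (T.toLinearMap ^ n) := by
  intro a b h
  have : ‖(T.toLinearMap ^ n) (a - b)‖ = 0 := by rw [map_sub, h, sub_self, norm_zero]
  rw [pow_norm T n] at this
  simpa [sub_eq_zero] using norm_eq_zero.mp this

lemma isClosed_range_pow [CompleteSpace E] (T : E →ₗᵢ[𝕜] E) (n : ℕ) :
    IsClosed ((range (T.toLinearMap ^ n) : Submodule 𝕜 E) : Set E) := by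
  have hiso : Isometry (T.toLinearMap ^ n) :=
    AddMonoidHomClass.isometry_of_norm _ (pow_norm T n)
  rw [LinearMap.coe_range]
  exact hiso.isClosedEmbedding.isClosed_range

lemma rank_quot_pow_le (T : E →ₗᵢ[𝕜] E)
    (hcodim : Module.rank 𝕜 (E ⧸ range T.toLinearMap) = 1) (n : ℕ) :
    Module.rank 𝕜 (E ⧸ range (T.toLinearMap ^ n)) ≤ n := by
  induction n with
  | zero =>
    have : range (T.toLinearMap ^ 0) = ⊤ := by simp [LinearMap.range_eq_top]; exact fun x => ⟨x, rfl⟩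
    rw [this]
    haveI : Subsingleton (E ⧸ (⊤ : Submodule 𝕜 E)) := Submodule.Quotient.subsingleton_iff.mpr rfl
    simp [rank_subsingleton']
  | succ m ih =>
    set Tl := T.toLinearMap
    have hle : range (Tl ^ (m+1)) ≤ range (Tl ^ m) := by
      rw [pow_succ]
      intro x hx
      obtain ⟨y, rfl⟩ := hx
      exact ⟨Tl y, rfl⟩
    set π : (E ⧸ range (Tl ^ (m+1))) →ₗ[𝕜] (E ⧸ range (Tl ^ m)) :=
      Submodule.mapQ _ _ (LinearMap.id) (by simpa using hle) with hπ
    have hsurj : Function.Surjective π := by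
      intro x
      obtain ⟨f, rfl⟩ := Submodule.mkQ_surjective _ x
      exact ⟨Submodule.Quotient.mk f, rfl⟩
    set g : E →ₗ[𝕜] (E ⧸ range (Tl ^ (m+1))) :=
      (range (Tl ^ (m+1))).mkQ ∘ₗ (Tl ^ m) with hg
    have hkerg : ker g = range Tl := by
      ext f
      simp only [hg, LinearMap.mem_ker, LinearMap.comp_apply, Submodule.mkQ_apply,
        Submodule.Quotient.mk_eq_zero]
      constructor
      · rintro ⟨h, hh⟩
        refine ⟨h, pow_inj T m ?_⟩
        rw [← hh, pow_succ, Module.End.mul_apply]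
      · rintro ⟨h, rfl⟩
        exact ⟨h, by rw [pow_succ, Module.End.mul_apply]⟩
    have hrangeg : LinearMap.range g = ker π := by
      ext x
      constructor
      · rintro ⟨f, rfl⟩
        simp only [hg, LinearMap.mem_ker, LinearMap.comp_apply, Submodule.mkQ_apply, hπ]
        rw [Submodule.mapQ_apply]
        simpa [Submodule.Quotient.mk_eq_zero] using ⟨f, rfl⟩
      · intro hx
        obtain ⟨f, rfl⟩ := Submodule.mkQ_surjective _ x
        rw [LinearMap.mem_ker, hπ, Submodule.mkQ_apply, Submodule.mapQ_apply,
          Submodule.Quotient.mk_eq_zero] at hx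
        obtain ⟨h, hh⟩ := hx
        exact ⟨h, by simp [hg, hh]⟩
    have hrank := LinearMap.rank_range_add_rank_ker π
    have h1 : Module.rank 𝕜 (LinearMap.range π) = Module.rank 𝕜 (E ⧸ range (Tl ^ m)) := by
      rw [LinearMap.range_eq_top.mpr hsurj, rank_top]
    have h2 : Module.rank 𝕜 (ker π) = 1 := by
      rw [← hrangeg]
      rw [← (LinearMap.quotKerEquivRange g).rank_eq, hkerg]
      exact hcodim
    rw [h1, h2] at hrank
    rw [← hrank]
    push_cast
    exact add_le_add ih le_rfl

lemma exists_total [CompleteSpace E] (T : E →ₗᵢ[𝕜] E)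
    (hcodim : Module.rank 𝕜 (E ⧸ range T.toLinearMap) = 1)
    (hshift : (⨅ n : ℕ, LinearMap.range (T.toLinearMap ^ (n + 1))) = ⊥) :
    ∃ (ι : Type) (_ : Countable ι) (ν : ι → E →L[𝕜] 𝕜),
      ∀ f : E, (∀ i, ν i f = 0) → f = 0 := by
  have key : ∀ n : ℕ, ∃ (d : ℕ) (ν : Fin d → E →L[𝕜] 𝕜),
      ∀ f : E, (∀ j, ν j f = 0) → f ∈ range (T.toLinearMap ^ (n + 1)) := by
    intro n
    set S : Submodule 𝕜 E := range (T.toLinearMap ^ (n + 1)) with hS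
    haveI : IsClosed (S : Set E) := isClosed_range_pow T (n + 1)
    haveI : Module.Finite 𝕜 (E ⧸ S) := Module.rank_lt_aleph0_iff.mp
      (lt_of_le_of_lt (rank_quot_pow_le T hcodim (n + 1)) (Cardinal.nat_lt_aleph0 _))
    set q : E →L[𝕜] (E ⧸ S) :=
      LinearMap.mkContinuous S.mkQ 1
        (fun x => by simpa using Submodule.Quotient.norm_mk_le S x) with hq
    set b := Module.finBasis 𝕜 (E ⧸ S) with hb
    refine ⟨Module.finrank 𝕜 (E ⧸ S),
      fun j => (LinearMap.toContinuousLinearMap (b.coord j)).comp q, ?_⟩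
    intro f hf
    have hz : q f = 0 := by
      have := fun j => hf j
      simp only [ContinuousLinearMap.comp_apply] at this
      have hcoord : ∀ j, b.coord j (q f) = 0 := by
        intro j
        simpa using this j
      have := b.repr.injective (a₁ := q f) (a₂ := 0) ?_
      · exact this
      · ext j
        simpa [Module.Basis.coord_apply] using hcoord j
    have : f ∈ S := by
      rwa [hq, LinearMap.mkContinuous_apply, Submodule.mkQ_apply,
        Submodule.Quotient.mk_eq_zero] at hz
    exact this
  choose d ν hν using key
  refine ⟨(n : ℕ) × Fin (d n), inferInstance, fun p => ν p.1 p.2, ?_⟩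
  intro f hf
  have hmem : ∀ n : ℕ, f ∈ range (T.toLinearMap ^ (n + 1)) :=
    fun n => hν n f (fun j => hf ⟨n, j⟩)
  have : f ∈ (⨅ n : ℕ, LinearMap.range (T.toLinearMap ^ (n + 1))) :=
    Submodule.mem_iInf _ |>.mpr hmem
  rwa [hshift, Submodule.mem_bot] at this

end Aux
open scoped BoundedContinuousFunction
section Bump
variable {𝕜 : Type*} [RCLike 𝕜] {M : Type*} [MetricSpace M]

noncomputable def bump (δ : ℝ) (y : M) : M →ᵇ 𝕜 :=
  BoundedContinuousFunction.ofNormedAddCommGroup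
    (fun x => ((min 1 (max 0 (1 - dist x y / δ)) : ℝ) : 𝕜))
    (RCLike.continuous_ofReal.comp (by fun_prop))
    1 (fun x => by
      rw [RCLike.norm_ofReal, abs_le]
      constructor
      · have : (0:ℝ) ≤ min 1 (max 0 (1 - dist x y / δ)) :=
          le_min zero_le_one (le_max_left _ _)
        linarith
      · exact min_le_left _ _)

lemma bump_apply (δ : ℝ) (y x : M) :
    (bump (𝕜 := 𝕜) δ y) x = ((min 1 (max 0 (1 - dist x y / δ)) : ℝ) : 𝕜) := rfl

lemma bump_norm_le (δ : ℝ) (y x : M) : ‖(bump (𝕜 := 𝕜) δ y) x‖ ≤ 1 := by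
  rw [bump_apply, RCLike.norm_ofReal, abs_le]
  constructor
  · have : (0:ℝ) ≤ min 1 (max 0 (1 - dist x y / δ)) :=
      le_min zero_le_one (le_max_left _ _)
    linarith
  · exact min_le_left _ _

lemma bump_self (δ : ℝ) (y : M) : (bump (𝕜 := 𝕜) δ y) y = 1 := by
  rw [bump_apply]
  simp

lemma bump_dist_lt {δ : ℝ} (hδ : 0 < δ) {y x : M} (h : (bump (𝕜 := 𝕜) δ y) x ≠ 0) :
    dist x y < δ := by
  by_contra hd
  push_neg at hd
  apply h
  rw [bump_apply]
  have h1 : (1:ℝ) ≤ dist x y / δ := (one_le_div hδ).mpr hd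
  have : max 0 (1 - dist x y / δ) = 0 := max_eq_left (by linarith)
  rw [this, min_eq_right zero_le_one]
  simp

end Bump

section CountSupp
variable {𝕜 : Type*} [RCLike 𝕜] {E : Type*} [NormedAddCommGroup E] [NormedSpace 𝕜 E]

lemma countable_support {I : Type*} (ν : E →L[𝕜] 𝕜) (S : Set I) (g : I → E)
    (hb : ∀ t : Finset I, ↑t ⊆ S → ∀ c : I → 𝕜, (∀ y, ‖c y‖ ≤ 1) →
      ‖∑ y ∈ t, c y • g y‖ ≤ 1) :
    {y ∈ S | ν (g y) ≠ 0}.Countable := by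
  have hdecomp : {y ∈ S | ν (g y) ≠ 0} =
      ⋃ n : ℕ, {y ∈ S | 1 / (n + 1 : ℝ) < ‖ν (g y)‖} := by
    ext y
    simp only [Set.mem_setOf_eq, Set.mem_iUnion]
    constructor
    · rintro ⟨hyS, hy⟩
      obtain ⟨n, hn⟩ := exists_nat_one_div_lt (norm_pos_iff.mpr hy)
      exact ⟨n, hyS, hn⟩
    · rintro ⟨n, hyS, hn⟩
      refine ⟨hyS, ?_⟩
      intro h0
      rw [h0, norm_zero] at hn
      have : (0:ℝ) < 1 / (n + 1 : ℝ) := by positivity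
      linarith
  rw [hdecomp]
  apply Set.countable_iUnion
  intro n
  apply Set.Finite.countable
  by_contra hinf
  have hinf' : {y ∈ S | 1 / (n + 1 : ℝ) < ‖ν (g y)‖}.Infinite := hinf
  obtain ⟨t, hts, hcard⟩ := hinf'.exists_subset_card_eq (⌈(n + 1 : ℝ) * ‖ν‖⌉₊ + 1)
  set c : I → 𝕜 := fun y => ((‖ν (g y)‖ : ℝ) : 𝕜) / ν (g y) with hc
  have hc1 : ∀ y, ‖c y‖ ≤ 1 := by
    intro y
    rw [hc]
    simp only [norm_div, RCLike.norm_ofReal, abs_norm]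
    rcases eq_or_ne (ν (g y)) 0 with h | h
    · simp [h]
    · rw [div_self (norm_ne_zero_iff.mpr h)]
  have htS : (↑t : Set I) ⊆ S := fun y hy => (hts hy).1
  have hkey : ∀ y ∈ t, ν (c y • g y) = ((‖ν (g y)‖ : ℝ) : 𝕜) := by
    intro y hy
    have hne : ν (g y) ≠ 0 := by
      intro h0
      have := (hts hy).2
      rw [h0, norm_zero] at this
      have h1 : (0:ℝ) < 1 / (n + 1 : ℝ) := by positivity
      linarith
    rw [map_smul, smul_eq_mul, hc, div_mul_cancel₀ _ hne]
  have hsum : ν (∑ y ∈ t, c y • g y) = (((∑ y ∈ t, ‖ν (g y)‖) : ℝ) : 𝕜) := by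
    rw [map_sum, RCLike.ofReal_sum]
    exact Finset.sum_congr rfl hkey
  have hub : ‖ν (∑ y ∈ t, c y • g y)‖ ≤ ‖ν‖ := by
    calc ‖ν (∑ y ∈ t, c y • g y)‖ ≤ ‖ν‖ * ‖∑ y ∈ t, c y • g y‖ := ν.le_opNorm _
      _ ≤ ‖ν‖ * 1 := by
          apply mul_le_mul_of_nonneg_left (hb t htS c hc1) (norm_nonneg _)
      _ = ‖ν‖ := mul_one _
  have hlb : (t.card : ℝ) * (1 / (n + 1 : ℝ)) ≤ ‖ν (∑ y ∈ t, c y • g y)‖ := by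
    rw [hsum, RCLike.norm_ofReal]
    have h0 : (t.card : ℝ) * (1 / (n + 1 : ℝ)) ≤ ∑ y ∈ t, ‖ν (g y)‖ := by
      rw [Finset.card_eq_sum_ones t]
      push_cast
      rw [Finset.sum_mul]
      apply Finset.sum_le_sum
      intro y hy
      rw [one_mul]
      exact le_of_lt (hts hy).2
    calc (t.card : ℝ) * (1 / (n + 1 : ℝ)) ≤ ∑ y ∈ t, ‖ν (g y)‖ := h0
      _ ≤ |∑ y ∈ t, ‖ν (g y)‖| := le_abs_self _
  have hcard' : ((n + 1 : ℝ)) * ‖ν‖ < (t.card : ℝ) := by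
    rw [hcard]
    push_cast
    have := Nat.le_ceil ((n + 1 : ℝ) * ‖ν‖)
    linarith
  have hpos : (0:ℝ) < 1 / (n + 1 : ℝ) := by positivity
  have : ‖ν‖ < (t.card : ℝ) * (1 / (n + 1 : ℝ)) := by
    rw [mul_one_div, lt_div_iff₀ (by positivity)]
    calc ‖ν‖ * (n + 1 : ℝ) = (n + 1 : ℝ) * ‖ν‖ := mul_comm _ _
      _ < t.card := hcard'
  linarith
end CountSupp
section Sep
variable {M : Type*} [MetricSpace M]

lemma exists_uncountable_separated (hM : ¬ TopologicalSpace.SeparableSpace M) :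
    ∃ ε : ℝ, 0 < ε ∧ ∃ S : Set M, ¬ S.Countable ∧
      S.Pairwise (fun a b => ε ≤ dist a b) := by
  have H : ¬ ∀ ε > (0:ℝ), ∃ s : Set M, s.Countable ∧ ∀ x, ∃ y ∈ s, dist x y ≤ ε := by
    intro H
    haveI := Metric.secondCountable_of_almost_dense_set H
    exact hM TopologicalSpace.SecondCountableTopology.to_separableSpace
  push_neg at H
  obtain ⟨ε, hε, H⟩ := H
  refine ⟨ε, hε, ?_⟩
  have hzorn := zorn_subset_nonempty
    {s : Set M | s.Pairwise (fun a b => ε ≤ dist a b)} ?_ ∅ (by simp)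
  · obtain ⟨m, -, hm⟩ := hzorn
    refine ⟨m, ?_, hm.1⟩
    intro hct
    obtain ⟨x, hx⟩ := H m hct
    have hxm : x ∉ m := by
      intro hxm
      have := hx x hxm
      simp at this
      linarith
    have hins : insert x m ∈ {s : Set M | s.Pairwise (fun a b => ε ≤ dist a b)} := by
      haveI : Std.Symm (fun a b : M => ε ≤ dist a b) := ⟨fun a b hab => by rwa [dist_comm]⟩
      apply hm.1.insert_of_symm
      · intro b hb _
        exact le_of_lt (hx b hb)
    have := hm.2 hins (Set.subset_insert x m)
    exact hxm (this (Set.mem_insert x m))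
  · intro c hc hchain hne
    refine ⟨⋃₀ c, ?_, fun s hs => Set.subset_sUnion_of_mem hs⟩
    intro a ha b hb hab
    obtain ⟨s, hs, has⟩ := ha
    obtain ⟨s', hs', hbs'⟩ := hb
    rcases hchain.total hs hs' with h | h
    · exact hc hs' (h has) hbs' hab
    · exact hc hs has (h hbs') hab
end Sep
/-- If `C*(M)` (bounded continuous 𝕜-valued functions with sup norm) on a complete
metric space `M` admits an isometric shift (a linear isometry whose range has
codimension 1 and whose iterated ranges intersect in `{0}`), then `M` is separable. -/
theorem stmt_0 {𝕜 : Type*} [RCLike 𝕜] (M : Type*) [MetricSpace M] [CompleteSpace M]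
    (T : (M →ᵇ 𝕜) →ₗᵢ[𝕜] (M →ᵇ 𝕜))
    (hcodim : Module.rank 𝕜 ((M →ᵇ 𝕜) ⧸ LinearMap.range T.toLinearMap) = 1)
    (hshift : (⨅ n : ℕ, LinearMap.range (T.toLinearMap ^ (n + 1))) = ⊥) :
    TopologicalSpace.SeparableSpace M := by
  by_contra hsep
  obtain ⟨ε, hε, S, hSunc, hSsep⟩ := exists_uncountable_separated hsep
  set δ : ℝ := ε / 2 with hδdef
  have hδ : 0 < δ := by positivity
  set b : M → (M →ᵇ 𝕜) := fun y => bump δ y with hbdef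
  obtain ⟨ι, hι, ν, htotal⟩ := exists_total T hcodim hshift
  -- disjoint supports give the finite-sum norm bound
  have hbound : ∀ t : Finset M, ↑t ⊆ S → ∀ c : M → 𝕜, (∀ y, ‖c y‖ ≤ 1) →
      ‖∑ y ∈ t, c y • b y‖ ≤ 1 := by
    intro t hts c hc
    rw [BoundedContinuousFunction.norm_le zero_le_one]
    intro x
    have happ : (∑ y ∈ t, c y • b y) x = ∑ y ∈ t, c y * (b y) x := by
      rw [BoundedContinuousFunction.coe_sum, Finset.sum_apply]
      exact Finset.sum_congr rfl fun y _ => rfl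
    rw [happ]
    by_cases hx : ∃ y ∈ t, (b y) x ≠ 0
    · obtain ⟨y₀, hy₀t, hy₀⟩ := hx
      rw [Finset.sum_eq_single y₀]
      · calc ‖c y₀ * (b y₀) x‖ = ‖c y₀‖ * ‖(b y₀) x‖ := norm_mul _ _
          _ ≤ 1 * 1 := mul_le_mul (hc y₀) (bump_norm_le δ y₀ x) (norm_nonneg _) zero_le_one
          _ = 1 := one_mul _
      · intro y hyt hyne
        have hby : (b y) x = 0 := by
          by_contra hby
          have h1 : dist x y < δ := bump_dist_lt hδ hby
          have h2 : dist x y₀ < δ := bump_dist_lt hδ hy₀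
          have hsep' : ε ≤ dist y y₀ := hSsep (hts hyt) (hts hy₀t) hyne
          have : dist y y₀ ≤ dist y x + dist x y₀ := dist_triangle _ _ _
          rw [dist_comm y x] at this
          rw [hδdef] at h1 h2
          linarith
        rw [hby, mul_zero]
      · intro h
        exact absurd hy₀t h
    · push_neg at hx
      have : ∑ y ∈ t, c y * (b y) x = 0 := by
        apply Finset.sum_eq_zero
        intro y hy
        rw [hx y hy, mul_zero]
      rw [this, norm_zero]
      exact zero_le_one
  -- each functional has countable "support" among the bumps
  have hcount : ∀ i : ι, {y ∈ S | ν i (b y) ≠ 0}.Countable :=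
    fun i => countable_support (ν i) S b hbound
  have hUnion : (⋃ i : ι, {y ∈ S | ν i (b y) ≠ 0}).Countable := by
    haveI := hι
    exact Set.countable_iUnion hcount
  have hnot : ¬ S ⊆ ⋃ i : ι, {y ∈ S | ν i (b y) ≠ 0} :=
    fun h => hSunc (hUnion.mono h)
  obtain ⟨y₀, hy₀S, hy₀⟩ := Set.not_subset.mp hnot
  have hzero : b y₀ = 0 := by
    apply htotal
    intro i
    by_contra hne
    exact hy₀ (Set.mem_iUnion.mpr ⟨i, hy₀S, hne⟩)
  have : (b y₀) y₀ = 1 := bump_self δ y₀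
  rw [hzero] at this
  simp at this
end

section
/- With T as in the example, if g ∈ ⋂_{n=1}^∞ Tⁿ(C(X)), then g = 0. Hence T is an isometric shift on C(X). -/
namespace PiIrrSq

noncomputable section

open intervalIntegral MeasureTheory.MeasureSpace Set Polynomial Real
open scoped Nat

/-- The sequence of integrals used for Cartwright's proof of irrationality of `π`. -/
def I (n : ℕ) (θ : ℝ) : ℝ := ∫ x in (-1)..1, (1 - x ^ 2) ^ n * cos (x * θ)

variable {n : ℕ} {θ : ℝ}

lemma I_zero : I 0 θ * θ = 2 * sin θ := by
  rw [mul_comm, I]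
  simp [mul_integral_comp_mul_right, two_mul]

/--
Auxiliary for the proof that `π` is irrational.
While it is most natural to give the recursive formula for `I (n + 2) θ`, as well as give the second
base case of `I 1 θ`, it is in fact more convenient to give the recursive formula for `I (n + 1) θ`
in terms of `I n θ` and `I (n - 1) θ` (note the natural subtraction!).
Despite the usually inconvenient subtraction, this in fact allows deducing both of the above facts
with significantly fewer analysis computations.
In addition, note the `0 ^ n` on the right hand side - this is intentional, and again allows
combining the proof of the "usual" recursion formula and the base case `I 1 θ`.
-/
lemma recursion' (n : ℕ) :
    I (n + 1) θ * θ ^ 2 = - (2 * 2 * ((n + 1) * (0 ^ n * cos θ))) +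
      2 * (n + 1) * (2 * n + 1) * I n θ - 4 * (n + 1) * n * I (n - 1) θ := by
  rw [I]
  let f (x : ℝ) : ℝ := 1 - x ^ 2
  let u₁ (x : ℝ) : ℝ := f x ^ (n + 1)
  let u₁' (x : ℝ) : ℝ := - (2 * (n + 1) * x * f x ^ n)
  let v₁ (x : ℝ) : ℝ := sin (x * θ)
  let v₁' (x : ℝ) : ℝ := cos (x * θ) * θ
  let u₂ (x : ℝ) : ℝ := x * (f x) ^ n
  let u₂' (x : ℝ) : ℝ := (f x) ^ n - 2 * n * x ^ 2 * (f x) ^ (n - 1)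
  let v₂ (x : ℝ) : ℝ := cos (x * θ)
  let v₂' (x : ℝ) : ℝ := -sin (x * θ) * θ
  have hfd : Continuous f := by fun_prop
  have hu₁d : Continuous u₁' := by fun_prop
  have hv₁d : Continuous v₁' := by fun_prop
  have hu₂d : Continuous u₂' := by fun_prop
  have hv₂d : Continuous v₂' := by fun_prop
  have hu₁_eval_one : u₁ 1 = 0 := by simp only [u₁, f]; simp
  have hu₁_eval_neg_one : u₁ (-1) = 0 := by simp only [u₁, f]; simp
  have t : u₂ 1 * v₂ 1 - u₂ (-1) * v₂ (-1) = 2 * (0 ^ n * cos θ) := by simp [u₂, v₂, f, ← two_mul]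
  have hf (x) : HasDerivAt f (- 2 * x) x := by
    convert! (hasDerivAt_pow 2 x).const_sub 1 using 1
    simp
  have hu₁ (x) : HasDerivAt u₁ (u₁' x) x := by
    convert! (hf x).pow _ using 1
    simp only [Nat.add_succ_sub_one, u₁', Nat.cast_add_one]
    ring
  have hv₁ (x) : HasDerivAt v₁ (v₁' x) x := (hasDerivAt_mul_const θ).sin
  have hu₂ (x) : HasDerivAt u₂ (u₂' x) x := by
    convert! (hasDerivAt_id' x).fun_mul ((hf x).fun_pow _) using 1
    simp only [u₂']
    ring
  have hv₂ (x) : HasDerivAt v₂ (v₂' x) x := (hasDerivAt_mul_const θ).cos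
  convert_to (∫ (x : ℝ) in (-1)..1, u₁ x * v₁' x) * θ = _ using 1
  · simp_rw [u₁, v₁', f, ← intervalIntegral.integral_mul_const, sq θ, mul_assoc]
  rw [integral_mul_deriv_eq_deriv_mul (fun x _ => hu₁ x) (fun x _ => hv₁ x)
    (hu₁d.intervalIntegrable _ _) (hv₁d.intervalIntegrable _ _), hu₁_eval_one, hu₁_eval_neg_one,
    zero_mul, zero_mul, sub_zero, zero_sub, ← integral_neg, ← integral_mul_const]
  convert_to ((-2 : ℝ) * (n + 1)) * ∫ (x : ℝ) in (-1)..1, (u₂ x * v₂' x) = _ using 1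
  · rw [← integral_const_mul]
    congr 1 with x
    dsimp [u₁', v₁, u₂, v₂']
    ring
  rw [integral_mul_deriv_eq_deriv_mul (fun x _ => hu₂ x) (fun x _ => hv₂ x)
    (hu₂d.intervalIntegrable _ _) (hv₂d.intervalIntegrable _ _),
    mul_sub, t, neg_mul, neg_mul, neg_mul, sub_neg_eq_add]
  have (x : _) : u₂' x = (2 * n + 1) * f x ^ n - 2 * n * f x ^ (n - 1) := by
    cases n with
    | zero => simp [u₂']
    | succ n => ring!
  simp_rw [this, sub_mul, mul_assoc _ _ (v₂ _)]
  have : Continuous v₂ := by fun_prop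
  rw [mul_mul_mul_comm, integral_sub, mul_sub, add_sub_assoc]
  · congr 1
    simp_rw [integral_const_mul]
    ring!
  all_goals exact Continuous.intervalIntegrable (by fun_prop) _ _

/--
Auxiliary for the proof that `π` is irrational.
The recursive formula for `I (n + 2) θ * θ ^ 2` in terms of `I n θ` and `I (n + 1) θ`.
-/
lemma recursion (n : ℕ) :
    I (n + 2) θ * θ ^ 2 =
      2 * (n + 2) * (2 * n + 3) * I (n + 1) θ - 4 * (n + 2) * (n + 1) * I n θ := by
  rw [recursion' (n + 1)]
  simp
  ring!

/--
Auxiliary for the proof that `π` is irrational.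
The second base case for the induction on `n`, giving an explicit formula for `I 1 θ`.
-/
lemma I_one : I 1 θ * θ ^ 3 = 4 * sin θ - 4 * θ * cos θ := by
  rw [_root_.pow_succ, ← mul_assoc, recursion' 0, sub_mul, add_mul, mul_assoc _ (I 0 θ), I_zero]
  ring

/--
Auxiliary for the proof that `π` is irrational.
The first of the two integer-coefficient polynomials that describe the behaviour of the
sequence of integrals `I`.
While not given in the informal proof, these are easy to deduce from the recursion formulae.
-/
def sinPoly : ℕ → ℤ[X]
  | 0 => C 2
  | 1 => C 4
  | (n+2) => ((2 : ℤ) * (2 * n + 3)) • sinPoly (n + 1) + monomial 2 (-4) * sinPoly n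

/--
Auxiliary for the proof that `π` is irrational.
The second of the two integer-coefficient polynomials that describe the behaviour of the
sequence of integrals `I`.
While not given in the informal proof, these are easy to deduce from the recursion formulae.
-/
def cosPoly : ℕ → ℤ[X]
  | 0 => 0
  | 1 => monomial 1 (-4)
  | (n+2) => ((2 : ℤ) * (2 * n + 3)) • cosPoly (n + 1) + monomial 2 (-4) * cosPoly n

/--
Auxiliary for the proof that `π` is irrational.
Prove a degree bound for `sinPoly n` by induction. Note this is where we find the value in an
explicit description of `sinPoly`.
-/
lemma sinPoly_natDegree_le : ∀ n : ℕ, (sinPoly n).natDegree ≤ n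
  | 0 => by simp [sinPoly]
  | 1 => by simp only [natDegree_C, mul_one, zero_le', sinPoly]
  | n + 2 => by
      rw [sinPoly]
      refine natDegree_add_le_of_degree_le ((natDegree_smul_le _ _).trans ?_) ?_
      · exact (sinPoly_natDegree_le (n + 1)).trans (by simp)
      refine natDegree_mul_le.trans ?_
      simpa [add_comm 2] using sinPoly_natDegree_le n

/--
Auxiliary for the proof that `π` is irrational.
Prove a degree bound for `cosPoly n` by induction. Note this is where we find the value in an
explicit description of `cosPoly`.
-/
lemma cosPoly_natDegree_le : ∀ n : ℕ, (cosPoly n).natDegree ≤ n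
  | 0 => by simp [cosPoly]
  | 1 => (natDegree_monomial_le _).trans (by simp)
  | n + 2 => by
      rw [cosPoly]
      refine natDegree_add_le_of_degree_le ((natDegree_smul_le _ _).trans ?_) ?_
      · exact (cosPoly_natDegree_le (n + 1)).trans (by simp)
      exact natDegree_mul_le.trans (by simp [add_comm 2, cosPoly_natDegree_le n])

/--
Auxiliary for the proof that `π` is irrational.
The key lemma: the sequence of integrals `I` can be written as a linear combination of `sin` and
`cos`, with coefficients given by the polynomials `sinPoly` and `cosPoly`.
-/
lemma sinPoly_add_cosPoly_eval (θ : ℝ) :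
    ∀ n : ℕ,
      I n θ * θ ^ (2 * n + 1) = n ! * ((sinPoly n).eval₂ (Int.castRingHom _) θ * sin θ +
        (cosPoly n).eval₂ (Int.castRingHom _) θ * cos θ)
  | 0 => by simp [sinPoly, cosPoly, I_zero]
  | 1 => by simp [I_one, sinPoly, cosPoly, sub_eq_add_neg]
  | n + 2 => by
      calc I (n + 2) θ * θ ^ (2 * (n + 2) + 1) = I (n + 2) θ * θ ^ 2 * θ ^ (2 * n + 3) := by ring
        _ = 2 * (n + 2) * (2 * n + 3) * (I (n + 1) θ * θ ^ (2 * (n + 1) + 1)) -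
            4 * (n + 2) * (n + 1) * θ ^ 2 * (I n θ * θ ^ (2 * n + 1)) := by rw [recursion]; ring
        _ = _ := by simp [sinPoly_add_cosPoly_eval, sinPoly, cosPoly, Nat.factorial_succ]; ring

/--
Auxiliary for the proof that `π` is irrational.
For a polynomial `p` with natural degree `≤ k` and integer coefficients, evaluating `p` at a
rational `a / b` gives a rational of the form `z / b ^ k`.
TODO: should this be moved elsewhere? It uses none of the pi-specific definitions.
-/
lemma is_integer {p : ℤ[X]} (a b : ℤ) {k : ℕ} (hp : p.natDegree ≤ k) :
    ∃ z : ℤ, p.eval₂ (Int.castRingHom ℝ) (a / b) * b ^ k = z := by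
  rcases eq_or_ne b 0 with rfl | hb
  · rcases k.eq_zero_or_pos with rfl | hk
    · exact ⟨p.coeff 0, by simp⟩
    exact ⟨0, by simp [hk.ne']⟩
  refine ⟨∑ i ∈ p.support, p.coeff i * a ^ i * b ^ (k - i), ?_⟩
  conv => lhs; rw [← sum_monomial_eq p]
  rw [eval₂_sum, sum, Finset.sum_mul, Int.cast_sum]
  simp only [eval₂_monomial, eq_intCast, div_pow, Int.cast_mul, Int.cast_pow]
  refine Finset.sum_congr rfl (fun i hi => ?_)
  have ik := (le_natDegree_of_mem_supp i hi).trans hp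
  rw [mul_assoc, div_mul_comm, ← Int.cast_pow, ← Int.cast_pow, ← Int.cast_pow,
    ← pow_sub_mul_pow b ik, ← Int.cast_div_charZero, Int.mul_ediv_cancel _ (pow_ne_zero _ hb),
    ← mul_assoc, mul_right_comm, ← Int.cast_pow]
  exact dvd_mul_left _ _

open Filter

/--
Auxiliary for the proof that `π` is irrational.
The integrand in the definition of `I` is nonnegative and takes a positive value at least one point,
so the integral is positive.
-/
lemma I_pos : 0 < I n (π / 2) := by
  refine integral_pos (by norm_num) (Continuous.continuousOn (by continuity)) ?_ ⟨0, by simp⟩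
  refine fun x hx => mul_nonneg (pow_nonneg ?_ _) ?_
  · rw [sub_nonneg, sq_le_one_iff_abs_le_one, abs_le]
    exact ⟨hx.1.le, hx.2⟩
  refine cos_nonneg_of_neg_pi_div_two_le_of_le ?_ ?_ <;>
  nlinarith [hx.1, hx.2, pi_pos]

/--
Auxiliary for the proof that `π` is irrational.
The integrand in the definition of `I` is bounded by 1 and the interval has length 2, so the
integral is bounded above by `2`.
-/
lemma I_le (n : ℕ) : I n (π / 2) ≤ 2 := by
  rw [← norm_of_nonneg I_pos.le]
  refine (norm_integral_le_of_norm_le_const ?_).trans (show (1 : ℝ) * _ ≤ _ by norm_num)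
  intros x hx
  simp only [uIoc_of_le, neg_le_self_iff, zero_le_one, mem_Ioc] at hx
  rw [norm_eq_abs, abs_mul, abs_pow]
  refine mul_le_one₀ (pow_le_one₀ (abs_nonneg _) ?_) (abs_nonneg _) (abs_cos_le_one _)
  rw [abs_le]
  constructor <;> nlinarith

/--
Auxiliary for the proof that `π` is irrational.
For any real `a`, we have that `a ^ (2n+1) / n!` tends to `0` as `n → ∞`.  This is just a
reformulation of tendsto_pow_div_factorial_atTop, which asserts the same for `a ^ n / n!`
-/
lemma tendsto_pow_div_factorial_at_top_aux (a : ℝ) :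
    Tendsto (fun n => (a : ℝ) ^ (2 * n + 1) / n !) atTop (nhds 0) := by
  rw [← mul_zero a]
  refine ((FloorSemiring.tendsto_pow_div_factorial_atTop (a ^ 2)).const_mul a).congr (fun x => ?_)
  rw [← pow_mul, mul_div_assoc', _root_.pow_succ']

/-- If `x` is rational, it can be written as `a / b` with `a : ℤ` and `b : ℕ` satisfying `b > 0`. -/

lemma not_irrational_exists_rep {x : ℝ} :
    ¬Irrational x → ∃ (a : ℤ) (b : ℕ), 0 < b ∧ x = a / b := by
  rw [Irrational, not_not, mem_range]
  rintro ⟨q, rfl⟩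
  exact ⟨q.num, q.den, q.pos, by exact_mod_cast (Rat.num_div_den _).symm⟩

lemma sinPoly_even : ∀ n : ℕ, ∃ q : ℤ[X], q.natDegree ≤ n ∧ sinPoly n = q.comp (X ^ 2)
  | 0 => ⟨C 2, by simp [sinPoly]⟩
  | 1 => ⟨C 4, by simp [sinPoly]⟩
  | n+2 => by
    obtain ⟨q1, hd1, he1⟩ := sinPoly_even (n+1)
    obtain ⟨q0, hd0, he0⟩ := sinPoly_even n
    refine ⟨((2:ℤ) * (2*n+3)) • q1 + monomial 1 (-4) * q0, ?_, ?_⟩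
    · refine natDegree_add_le_of_degree_le ((natDegree_smul_le _ _).trans (hd1.trans (by simp))) ?_
      refine natDegree_mul_le.trans ?_
      have : (monomial 1 (-4 : ℤ)).natDegree ≤ 1 := natDegree_monomial_le _
      omega
    · rw [sinPoly, he1, he0, add_comp, smul_comp, mul_comp]
      congr 1
      congr 1
      rw [← C_mul_X_pow_eq_monomial, ← C_mul_X_pow_eq_monomial]
      simp [pow_one]

theorem irrational_pi_sq : Irrational (π ^ 2) := by
  by_contra h'
  obtain ⟨a, b, hb, h⟩ := not_irrational_exists_rep h'
  have hb' : (0:ℝ) < b := by positivity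
  have ha : (0 : ℝ) < a := by
    have h2 : 0 < (a:ℝ)/b := h ▸ (by positivity : (0:ℝ) < π ^ 2)
    rwa [lt_div_iff₀ hb', zero_mul] at h2
  have j : ∀ᶠ n : ℕ in atTop, π * ((a:ℝ) ^ n / n !) < 1 := by
    have h2 := (FloorSemiring.tendsto_pow_div_factorial_atTop (a:ℝ)).const_mul π
    rw [mul_zero] at h2
    exact h2.eventually_lt_const one_pos
  obtain ⟨n, hn⟩ := j.exists
  obtain ⟨q, hqd, hqe⟩ := sinPoly_even n
  obtain ⟨z, hz⟩ := is_integer a (4 * b) (k := n) hqd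
  have e := sinPoly_add_cosPoly_eval (π / 2) n
  rw [cos_pi_div_two, sin_pi_div_two, mul_zero, mul_one, add_zero] at e
  have hbne : (b:ℝ) ≠ 0 := ne_of_gt hb'
  have hsq : (π / 2) ^ 2 = (a:ℝ) / ((4 * b : ℤ) : ℝ) := by
    push_cast
    rw [div_pow, h]
    field_simp
    ring
  have hev : eval₂ (Int.castRingHom ℝ) (π / 2) (sinPoly n)
      = eval₂ (Int.castRingHom ℝ) ((a:ℝ) / ((4 * b : ℤ) : ℝ)) q := by
    rw [hqe, eval₂_comp]
    congr 1
    rw [← hsq]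
    simp
  have hpow : (π / 2) ^ (2 * n + 1) = (π / 2) * ((a:ℝ) ^ n / ((4 * b:ℤ):ℝ) ^ n) := by
    rw [pow_succ', pow_mul, hsq, div_pow]
  have h4bpow : (((4 * b:ℤ):ℝ)) ^ n ≠ 0 := by
    push_cast
    positivity
  have hne : ((n ! : ℕ) : ℝ) ≠ 0 := by positivity
  have hz2 : (z : ℝ) = I n (π/2) * (π/2) * ((a:ℝ)^n / n !) := by
    rw [← hz, ← hev]
    rw [hpow] at e
    field_simp at e ⊢
    linear_combination (-1 : ℝ) * e
  have hzpos : (0:ℝ) < z := by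
    rw [hz2]
    exact mul_pos (mul_pos I_pos (by positivity)) (by positivity)
  have hzlt : (z:ℝ) < 1 := by
    rw [hz2]
    calc I n (π/2) * (π/2) * ((a:ℝ)^n / n !) ≤ 2 * (π/2) * ((a:ℝ)^n / n !) := by
          have h1 := I_le n
          have h2 : (0:ℝ) ≤ (π/2) * ((a:ℝ)^n/ n !) := by positivity
          nlinarith
      _ = π * ((a:ℝ)^n / n !) := by ring
      _ < 1 := hn
  have h01 : (0:ℤ) < z := by exact_mod_cast hzpos
  have h11 : z < 1 := by exact_mod_cast hzlt
  omega

end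
end PiIrrSq



open Complex

attribute [local instance] Classical.propDecidable

/-- The compact set `X = ∂D ∪ {1/n : n ≥ 2} ∪ {0}` in `ℂ`. -/
def Xset : Set ℂ :=
  Metric.sphere (0 : ℂ) 1 ∪ {z : ℂ | ∃ n : ℕ, 2 ≤ n ∧ z = ((n : ℂ))⁻¹} ∪ {(0 : ℂ)}

/-- The operator of the example, acting on functions `ℂ → ℂ`. -/
noncomputable def Tfun (f : ℂ → ℂ) (z : ℂ) : ℂ :=
  if z ∈ Metric.sphere (0 : ℂ) 1 then f (z * Complex.exp (Complex.I * Real.sqrt 2))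
  else if z = ((2 : ℂ))⁻¹ then
    -f 1 / 2 - f (Complex.exp (-Complex.I * Real.sqrt 2)) / 2
  else if h : ∃ n : ℕ, 3 ≤ n ∧ z = ((n : ℂ))⁻¹ then -f (((h.choose : ℂ) - 1)⁻¹)
  else if z = 0 then -f 0
  else 0

namespace StmtAux

noncomputable def θ : ℝ := Real.sqrt 2

noncomputable def e (t : ℝ) : ℂ := Complex.exp (Complex.I * (t : ℂ))

lemma abs_e (t : ℝ) : ‖(e t)‖ = 1 := by
  rw [e, Complex.norm_exp]
  simp [mul_comm]

lemma e_mem_sphere (t : ℝ) : e t ∈ Metric.sphere (0 : ℂ) 1 := by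
  simp [Complex.dist_eq, abs_e]

lemma e_add (s t : ℝ) : e (s + t) = e s * e t := by
  rw [e, e, e, ← Complex.exp_add]
  push_cast
  ring_nf

lemma e_zero : e 0 = 1 := by simp [e]

lemma e_periodic (t : ℝ) (m : ℤ) : e (t + 2 * Real.pi * m) = e t := by
  rw [e_add]
  have h1 : e (2 * Real.pi * m) = 1 := by
    unfold e
    have h2 : (Complex.I * ((2 * Real.pi * (m:ℝ) : ℝ) : ℂ)) = (m : ℂ) * (2 * (Real.pi:ℂ) * Complex.I) := by
      push_cast; ring
    rw [h2, Complex.exp_int_mul_two_pi_mul_I]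
  rw [h1, mul_one]

lemma cont_e : Continuous e := by
  unfold e; fun_prop

lemma e_ne_half (t : ℝ) : e t ≠ ((2:ℂ))⁻¹ := by
  intro h
  have h1 := abs_e t
  rw [h, norm_inv] at h1
  norm_num [Complex.norm_two] at h1

lemma mem_sphere_iff (z : ℂ) : z ∈ Metric.sphere (0:ℂ) 1 ↔ ‖z‖ = 1 := by
  simp [Complex.dist_eq]

lemma sphere_mem_Xset {z : ℂ} (h : z ∈ Metric.sphere (0:ℂ) 1) : z ∈ Xset :=
  Or.inl (Or.inl h)

lemma e_mem_Xset (t : ℝ) : e t ∈ Xset := sphere_mem_Xset (e_mem_sphere t)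

lemma inv_mem_Xset {n : ℕ} (hn : 2 ≤ n) : ((n:ℂ))⁻¹ ∈ Xset :=
  Or.inl (Or.inr ⟨n, hn, rfl⟩)

lemma zero_mem_Xset : (0:ℂ) ∈ Xset := Or.inr rfl

lemma abs_inv_nat (n : ℕ) : ‖((n:ℂ))⁻¹‖ = ((n:ℝ))⁻¹ := by
  rw [norm_inv, Complex.norm_natCast]

lemma inv_not_sphere {n : ℕ} (hn : 2 ≤ n) : ((n:ℂ))⁻¹ ∉ Metric.sphere (0:ℂ) 1 := by
  rw [mem_sphere_iff, abs_inv_nat]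
  intro h
  have h2 : (2:ℝ) ≤ n := by exact_mod_cast hn
  have : (n:ℝ) ≠ 0 := by linarith
  have : (n:ℝ) = 1 := by
    field_simp at h
    linarith [h]
  linarith

lemma zero_not_sphere : (0:ℂ) ∉ Metric.sphere (0:ℂ) 1 := by
  rw [mem_sphere_iff]; simp

lemma inv_nat_inj {n m : ℕ} (hn : 2 ≤ n) (hm : 2 ≤ m) (h : ((n:ℂ))⁻¹ = ((m:ℂ))⁻¹) : n = m := by
  have hn0 : (n:ℂ) ≠ 0 := by exact_mod_cast (by omega : n ≠ 0)
  have hm0 : (m:ℂ) ≠ 0 := by exact_mod_cast (by omega : m ≠ 0)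
  have : (n:ℂ) = (m:ℂ) := by
    rwa [inv_inj] at h
  exact_mod_cast this

lemma inv_nat_ne_zero {n : ℕ} (hn : 2 ≤ n) : ((n:ℂ))⁻¹ ≠ 0 := by
  simp only [ne_eq, inv_eq_zero]
  exact_mod_cast (by omega : n ≠ 0)

/-- points of `Xset` -/
noncomputable def pS (t : ℝ) : ↥Xset := ⟨e t, e_mem_Xset t⟩

noncomputable def pI (k : ℕ) : ↥Xset := ⟨(((k+2 : ℕ)):ℂ)⁻¹, inv_mem_Xset (by omega)⟩

noncomputable def p0 : ↥Xset := ⟨0, zero_mem_Xset⟩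

lemma pS_congr (s t : ℝ) (h : s = t) : pS s = pS t := by rw [h]

lemma pS_eq_of_e_eq {s t : ℝ} (h : e s = e t) : pS s = pS t := Subtype.ext h

lemma floor_eq_abs_lt {x y : ℝ} (hx : 0 ≤ x) (hy : 0 ≤ y) (h : ⌊x⌋ = ⌊y⌋) : |x - y| < 1 := by
  have h1 := Int.fract_nonneg x
  have h2 := Int.fract_lt_one x
  have h3 := Int.fract_nonneg y
  have h4 := Int.fract_lt_one y
  have e1 : x = ⌊x⌋ + Int.fract x := (Int.floor_add_fract x).symm
  have e2 : y = ⌊y⌋ + Int.fract y := (Int.floor_add_fract y).symm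
  have hc : ((⌊x⌋:ℤ):ℝ) = ((⌊y⌋:ℤ):ℝ) := by exact_mod_cast h
  rw [abs_lt]
  constructor <;> linarith

lemma pigeon (α : ℝ) (hα : Irrational α) (N : ℕ) (hN : 0 < N) :
    ∃ (d : ℕ) (m : ℤ), 1 ≤ d ∧ (d:ℝ) * α - m ≠ 0 ∧ |(d:ℝ) * α - m| < 1 / N := by
  have hNR : (0:ℝ) < N := by exact_mod_cast hN
  set u : ℕ → ℤ := fun k => ⌊(N:ℝ) * Int.fract ((k:ℝ) * α)⌋ with hu
  have hmaps : ∀ k ∈ Finset.range (N+1), (u k).toNat ∈ Finset.range N := by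
    intro k _
    rw [Finset.mem_range]
    have h1 : (N:ℝ) * Int.fract ((k:ℝ)*α) < N := by
      have := Int.fract_lt_one ((k:ℝ)*α)
      nlinarith
    have h2 : u k < N := by
      rw [hu, Int.floor_lt]
      exact_mod_cast h1
    omega
  obtain ⟨k, hk, l, hl, hkl, heq⟩ :=
    Finset.exists_ne_map_eq_of_card_lt_of_maps_to (by simp) hmaps
  have hnn : ∀ j : ℕ, 0 ≤ u j := fun j =>
    Int.floor_nonneg.mpr (mul_nonneg hNR.le (Int.fract_nonneg _))
  have hueq : u k = u l := by
    rw [← Int.toNat_of_nonneg (hnn k), ← Int.toNat_of_nonneg (hnn l), heq]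
  clear heq hk hl
  -- general step for k < l
  have main : ∀ k l : ℕ, k < l → u k = u l →
      ∃ (d : ℕ) (m : ℤ), 1 ≤ d ∧ (d:ℝ) * α - m ≠ 0 ∧ |(d:ℝ) * α - m| < 1 / N := by
    intro k l hlt he
    refine ⟨l - k, ⌊(l:ℝ)*α⌋ - ⌊(k:ℝ)*α⌋, by omega, ?_, ?_⟩
    · intro h0
      push_cast [Nat.cast_sub hlt.le] at h0
      have hd0 : (l:ℝ) - k ≠ 0 := by
        have : (k:ℝ) < l := by exact_mod_cast hlt
        linarith
      apply hα
      refine ⟨((⌊(l:ℝ)*α⌋ - ⌊(k:ℝ)*α⌋ : ℤ) : ℚ) / ((l - k : ℕ) : ℚ), ?_⟩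
      push_cast [Nat.cast_sub hlt.le]
      rw [div_eq_iff hd0]
      linarith
    · have habs : |Int.fract ((l:ℝ)*α) - Int.fract ((k:ℝ)*α)| < 1 / N := by
        have h1 := floor_eq_abs_lt (mul_nonneg hNR.le (Int.fract_nonneg ((k:ℝ)*α)))
          (mul_nonneg hNR.le (Int.fract_nonneg ((l:ℝ)*α))) he
        rw [← mul_sub, abs_mul, _root_.abs_of_nonneg hNR.le] at h1
        rw [lt_div_iff₀ hNR]
        calc |Int.fract ((l:ℝ)*α) - Int.fract ((k:ℝ)*α)| * N
            = (N:ℝ) * |Int.fract ((k:ℝ)*α) - Int.fract ((l:ℝ)*α)| := by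
              rw [abs_sub_comm]; ring
          _ < 1 := h1
      have hrw : ((l - k : ℕ):ℝ) * α - ((⌊(l:ℝ)*α⌋ - ⌊(k:ℝ)*α⌋ : ℤ):ℝ)
          = Int.fract ((l:ℝ)*α) - Int.fract ((k:ℝ)*α) := by
        have hc : ((l - k : ℕ):ℝ) = (l:ℝ) - k := by
          have : (k:ℝ) ≤ l := by exact_mod_cast hlt.le
          push_cast [Nat.cast_sub hlt.le]
          ring
        rw [hc]
        unfold Int.fract
        push_cast
        ring
      rw [hrw]
      exact habs
  rcases hkl.lt_or_gt with h | h
  · exact main k l h hueq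
  · exact main l k h hueq.symm

/-- density of the forward orbit of an irrational rotation, with tail constraint -/
lemma dense_orbit (α : ℝ) (hα : Irrational α) (K : ℕ) (s : ℝ) {δ : ℝ} (hδ : 0 < δ) :
    ∃ k : ℕ, K ≤ k ∧ ∃ M : ℤ, |(k:ℝ) * α - M - s| < δ := by
  obtain ⟨N, hN⟩ := exists_nat_gt (1/δ)
  have hN0 : 0 < N := by
    by_contra h
    push_neg at h
    interval_cases N
    simp at hN
    nlinarith [hN, hδ]
  obtain ⟨d, m, hd1, hne, hlt⟩ := pigeon α hα N hN0
  set β := (d:ℝ)*α - m with hβ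
  have hNR : (0:ℝ) < N := by exact_mod_cast hN0
  have hβδ : |β| < δ := by
    refine hlt.trans ?_
    rw [div_lt_iff₀ hNR, ← div_lt_iff₀' hδ]
    exact hN
  set x := s - (K:ℝ)*α with hx
  have key : ∀ j : ℕ, ∀ M' : ℤ, ((K + j*d : ℕ):ℝ) * α - (((j:ℤ)*m + M' : ℤ):ℝ) - s
      = (j:ℝ)*β - ((M':ℝ) + x) := by
    intro j M'
    push_cast
    rw [hβ, hx]
    ring
  rcases hne.lt_or_gt with hneg | hpos
  · -- β < 0
    set y := Int.fract (-x) with hy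
    have hy0 := Int.fract_nonneg (-x)
    have hy1 := Int.fract_lt_one (-x)
    set j' := ⌈y / (-β)⌉ with hj'
    have hj'0 : 0 ≤ j' := Int.ceil_nonneg (div_nonneg hy0 (by linarith))
    set j := j'.toNat with hj
    have hjr : (j:ℝ) = (j':ℝ) := by
      rw [hj]
      exact_mod_cast Int.toNat_of_nonneg hj'0
    have hb1 : y ≤ (j:ℝ) * (-β) := by
      rw [hjr]
      rw [← div_le_iff₀ (by linarith : (0:ℝ) < -β)]
      exact Int.le_ceil _
    have hb2 : (j:ℝ) * (-β) < y + (-β) := by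
      rw [hjr]
      have := Int.ceil_lt_add_one (y / (-β))
      have h2 : (j':ℝ) * (-β) < (y/(-β) + 1) * (-β) := by
        apply mul_lt_mul_of_pos_right this (by linarith)
      have hcan : (y / (-β)) * (-β) = y := div_mul_cancel₀ _ (by linarith : (-β) ≠ 0)
      calc (j':ℝ) * (-β) < (y/(-β) + 1) * (-β) := h2
        _ = y + (-β) := by rw [add_mul, one_mul, hcan]
    refine ⟨K + j*d, by omega, (j:ℤ)*m + ⌊-x⌋, ?_⟩
    rw [key j ⌊-x⌋]
    have hyx : y = -x - ⌊-x⌋ := by rw [hy]; unfold Int.fract; ring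
    rw [abs_lt]
    constructor <;> linarith [hβδ, neg_abs_le β, le_abs_self β, neg_le_abs β]
  · -- β > 0
    set y := Int.fract x with hy
    have hy0 := Int.fract_nonneg x
    have hy1 := Int.fract_lt_one x
    set j' := ⌈y / β⌉ with hj'
    have hj'0 : 0 ≤ j' := Int.ceil_nonneg (div_nonneg hy0 hpos.le)
    set j := j'.toNat with hj
    have hjr : (j:ℝ) = (j':ℝ) := by
      rw [hj]
      exact_mod_cast Int.toNat_of_nonneg hj'0
    have hb1 : y ≤ (j:ℝ) * β := by
      rw [hjr, ← div_le_iff₀ hpos]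
      exact Int.le_ceil _
    have hb2 : (j:ℝ) * β < y + β := by
      rw [hjr]
      have := Int.ceil_lt_add_one (y / β)
      have h2 : (j':ℝ) * β < (y/β + 1) * β := mul_lt_mul_of_pos_right this hpos
      have hcan : (y / β) * β = y := div_mul_cancel₀ _ (ne_of_gt hpos)
      calc (j':ℝ) * β < (y/β + 1) * β := h2
        _ = y + β := by rw [add_mul, one_mul, hcan]
    refine ⟨K + j*d, by omega, (j:ℤ)*m + (-⌊x⌋), ?_⟩
    rw [key j (-⌊x⌋)]
    have hyx : y = x - ⌊x⌋ := by rw [hy]; unfold Int.fract; ring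
    rw [abs_lt]
    push_cast
    constructor <;> linarith [hβδ, neg_abs_le β, le_abs_self β]


lemma fext_eq (f : C(↥Xset, ℂ)) {w : ℂ} (hw : w ∈ Xset) :
    (fun w : ℂ => if h : w ∈ Xset then f ⟨w, h⟩ else 0) w = f ⟨w, hw⟩ := dif_pos hw

section T
variable (T : C(↥Xset, ℂ) →ₗ[ℂ] C(↥Xset, ℂ))
  (hT : ∀ (f : C(↥Xset, ℂ)) (z : ↥Xset),
      T f z = Tfun (fun w : ℂ => if h : w ∈ Xset then f ⟨w, h⟩ else 0) (z : ℂ))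

include hT

lemma LA (f : C(↥Xset, ℂ)) (t : ℝ) : T f (pS t) = f (pS (t + θ)) := by
  rw [hT]
  have hme : ((pS t : ↥Xset) : ℂ) = e t := rfl
  rw [hme]
  unfold Tfun
  rw [if_pos (e_mem_sphere t)]
  have harg : e t * Complex.exp (Complex.I * Real.sqrt 2) = e (t + θ) := by
    rw [e_add]
    rfl
  rw [harg, fext_eq f (e_mem_Xset (t + θ))]
  rfl

lemma LB (f : C(↥Xset, ℂ)) : T f (pI 0) = -(f (pS 0) + f (pS (-θ))) / 2 := by
  rw [hT]
  have h2 : ((pI 0 : ↥Xset) : ℂ) = ((2:ℂ))⁻¹ := by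
    show (((0+2:ℕ)):ℂ)⁻¹ = _
    norm_num
  rw [h2]
  unfold Tfun
  rw [if_neg ?hs, if_pos rfl]
  case hs =>
    have : ((2:ℂ))⁻¹ = (((2:ℕ)):ℂ)⁻¹ := by norm_num
    rw [this]
    exact inv_not_sphere (le_refl 2)
  have h1 : (1:ℂ) = e 0 := e_zero.symm
  have hm : Complex.exp (-Complex.I * Real.sqrt 2) = e (-θ) := by
    unfold e θ
    push_cast
    ring_nf
  rw [h1, hm, fext_eq f (e_mem_Xset 0), fext_eq f (e_mem_Xset (-θ))]
  show -f (pS 0) / 2 - f (pS (-θ)) / 2 = _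
  ring

lemma LC (f : C(↥Xset, ℂ)) (k : ℕ) : T f (pI (k+1)) = -f (pI k) := by
  rw [hT]
  have hval : ((pI (k+1) : ↥Xset) : ℂ) = (((k+3:ℕ)):ℂ)⁻¹ := by
    show (((k+1+2:ℕ)):ℂ)⁻¹ = _
    push_cast
    ring_nf
  rw [hval]
  have hex : ∃ n : ℕ, 3 ≤ n ∧ (((k+3:ℕ)):ℂ)⁻¹ = ((n : ℂ))⁻¹ := ⟨k+3, by omega, rfl⟩
  unfold Tfun
  rw [if_neg (inv_not_sphere (by omega)), if_neg ?hne, dif_pos hex]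
  case hne =>
    intro h
    have h2 : ((2:ℂ))⁻¹ = (((2:ℕ)):ℂ)⁻¹ := by norm_num
    rw [h2] at h
    have := inv_nat_inj (by omega) (le_refl 2) h
    omega
  have hspec := hex.choose_spec
  have hcc : hex.choose = k + 3 :=
    inv_nat_inj (by have := hspec.1; omega) (by omega) hspec.2.symm
  have harg : ((hex.choose : ℂ) - 1)⁻¹ = (((k+2:ℕ)):ℂ)⁻¹ := by
    rw [hcc]
    push_cast
    ring_nf
  rw [harg, fext_eq f (inv_mem_Xset (by omega : 2 ≤ k+2))]
  rfl

lemma LD (f : C(↥Xset, ℂ)) : T f p0 = -f p0 := by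
  rw [hT]
  have h0 : ((p0 : ↥Xset) : ℂ) = 0 := rfl
  rw [h0]
  unfold Tfun
  rw [if_neg zero_not_sphere, if_neg ?h2, dif_neg ?h3, if_pos rfl,
    fext_eq f zero_mem_Xset]
  case h2 =>
    intro h
    have h2 : ((2:ℂ))⁻¹ = (((2:ℕ)):ℂ)⁻¹ := by norm_num
    rw [h2] at h
    exact inv_nat_ne_zero (le_refl 2) h.symm
  case h3 =>
    rintro ⟨n, hn3, hn⟩
    exact inv_nat_ne_zero (by omega : 2 ≤ n) hn.symm
  rfl

end T


open Filter Topology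

lemma irrational_pi_sq' : Irrational (Real.pi ^ 2) := PiIrrSq.irrational_pi_sq

lemma theta_pos : 0 < θ := Real.sqrt_pos.mpr (by norm_num)

lemma theta_sq : θ ^ 2 = 2 := Real.sq_sqrt (by norm_num)

lemma irr_aux (r : ℚ) (h : θ = Real.pi * r) : False := by
  have hr0 : (r:ℝ) ≠ 0 := by
    intro h0
    rw [h0, mul_zero] at h
    exact absurd h (ne_of_gt theta_pos)
  have h2 : Real.pi ^ 2 * (r:ℝ)^2 = 2 := by
    rw [← theta_sq, h]; ring
  apply irrational_pi_sq'
  refine ⟨2 / r^2, ?_⟩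
  push_cast
  rw [div_eq_iff (by positivity : ((r:ℝ))^2 ≠ 0)]
  linarith
lemma irr_alpha1 : Irrational (-θ / (2 * Real.pi)) := by
  rintro ⟨r, hr⟩
  apply irr_aux (-2 * r)
  have hπ : Real.pi ≠ 0 := Real.pi_ne_zero
  have : (r:ℝ) * (2 * Real.pi) = -θ := by
    rw [hr]; field_simp
  push_cast
  linarith

lemma irr_alpha2 : Irrational (-(2*θ) / (2 * Real.pi)) := by
  rintro ⟨r, hr⟩
  apply irr_aux (-r)
  have hπ : Real.pi ≠ 0 := Real.pi_ne_zero
  have : (r:ℝ) * (2 * Real.pi) = -(2*θ) := by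
    rw [hr]; field_simp
  push_cast
  linarith

lemma seq_tendsto : Tendsto (fun n : ℕ => (((n+2:ℕ)):ℂ)⁻¹) atTop (nhds 0) := by
  have h2 : Tendsto (fun n : ℕ => ((n:ℝ))⁻¹) atTop (nhds 0) := by
    simpa [one_div] using tendsto_one_div_atTop_nhds_zero_nat (𝕜 := ℝ)
  have h3 : Tendsto (fun n : ℕ => (((n+2:ℕ)):ℝ)⁻¹) atTop (nhds 0) :=
    Filter.Tendsto.congr (fun n => rfl) (h2.comp (tendsto_add_atTop_nat 2))
  have h5 : Tendsto (fun n : ℕ => ((((n+2:ℕ):ℝ)):ℂ)⁻¹) atTop (nhds 0) := by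
    have h6 := (Complex.continuous_ofReal.tendsto 0).comp h3
    rw [Complex.ofReal_zero] at h6
    exact Filter.Tendsto.congr
      (fun n => by rw [Function.comp_apply, Complex.ofReal_inv]) h6
  refine Filter.Tendsto.congr (fun n => ?_) h5
  rw [Complex.ofReal_natCast]

lemma Xset_eq : Xset = Metric.sphere (0:ℂ) 1 ∪
    insert (0:ℂ) (Set.range fun n : ℕ => (((n+2:ℕ)):ℂ)⁻¹) := by
  ext z
  constructor
  · rintro ((hs | ⟨n, hn2, rfl⟩) | h0)
    · exact Or.inl hs
    · refine Or.inr (Or.inr ⟨n - 2, ?_⟩)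
      show ((((n - 2 + 2:ℕ)):ℂ))⁻¹ = ((n:ℂ))⁻¹
      rw [show n - 2 + 2 = n from by omega]
    · exact Or.inr (Or.inl h0)
  · rintro (hs | (h0 | ⟨n, rfl⟩))
    · exact Or.inl (Or.inl hs)
    · exact Or.inr h0
    · exact Or.inl (Or.inr ⟨n+2, by omega, rfl⟩)

instance XsetCompact : CompactSpace ↥Xset := by
  rw [← isCompact_iff_compactSpace, Xset_eq]
  exact (isCompact_sphere 0 1).union (seq_tendsto.isCompact_insert_range)

lemma classify (z : ↥Xset) : (∃ t : ℝ, z = pS t) ∨ (∃ k : ℕ, z = pI k) ∨ z = p0 := by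
  obtain ⟨v, hv⟩ := z
  rcases hv with (hs | ⟨n, hn2, rfl⟩) | h0
  · left
    refine ⟨Complex.arg v, ?_⟩
    apply Subtype.ext
    show v = e (Complex.arg v)
    have h1 := Complex.norm_mul_exp_arg_mul_I v
    rw [mem_sphere_iff] at hs
    rw [hs, Complex.ofReal_one, one_mul] at h1
    unfold e
    rw [mul_comm]
    exact h1.symm
  · right; left
    refine ⟨n - 2, ?_⟩
    apply Subtype.ext
    show ((n:ℂ))⁻¹ = (((n-2+2:ℕ)):ℂ)⁻¹
    rw [show n - 2 + 2 = n by omega]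
  · right; right
    exact Subtype.ext h0

lemma continuous_pS : Continuous pS := Continuous.subtype_mk cont_e _

lemma pS_per (u : ℝ) (m : ℤ) : pS (u + 2 * Real.pi * m) = pS u :=
  Subtype.ext (e_periodic u m)

section T2
variable (T : C(↥Xset, ℂ) →ₗ[ℂ] C(↥Xset, ℂ))
  (hT : ∀ (f : C(↥Xset, ℂ)) (z : ↥Xset),
      T f z = Tfun (fun w : ℂ => if h : w ∈ Xset then f ⟨w, h⟩ else 0) (z : ℂ))

include hT

lemma LA' (f : C(↥Xset, ℂ)) (s : ℝ) : f (pS s) = T f (pS (s - θ)) := by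
  rw [LA T hT f (s - θ), pS_congr (s - θ + θ) s (by ring)]

/-- base case computation -/
lemma keyBase (f : C(↥Xset, ℂ)) :
    T f (pI 0) = (-1:ℂ)^(0+1)/2 * (T f (pS (-((0+1:ℕ):ℝ)*θ)) + T f (pS (-((0+2:ℕ):ℝ)*θ))) := by
  rw [LB T hT f]
  rw [LA' T hT f 0, LA' T hT f (-θ)]
  rw [pS_congr (0 - θ) (-((0+1:ℕ):ℝ)*θ) (by push_cast; ring),
    pS_congr (-θ - θ) (-((0+2:ℕ):ℝ)*θ) (by push_cast; ring)]
  rw [show ((-1:ℂ)^(0+1)) = -1 from by norm_num]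
  ring

lemma keyP : ∀ (m : ℕ) (g : C(↥Xset,ℂ)), g ∈ LinearMap.range (T^(m+1)) → ∀ k : ℕ, k ≤ m →
    g (pI k) = (-1:ℂ)^(k+1)/2 * (g (pS (-((k+1:ℕ):ℝ)*θ)) + g (pS (-((k+2:ℕ):ℝ)*θ))) := by
  intro m
  induction m with
  | zero =>
    rintro g ⟨f, rfl⟩ k hk
    interval_cases k
    rw [pow_one]
    exact keyBase T hT f
  | succ m ih =>
    rintro g ⟨f, rfl⟩ k hk
    have hsplit : (T^(m+1+1)) f = T ((T^(m+1)) f) := by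
      rw [pow_succ']
      rfl
    rw [hsplit]
    set h := (T^(m+1)) f with hh
    cases k with
    | zero => exact keyBase T hT h
    | succ j =>
      have hj : j ≤ m := by omega
      rw [LC T hT h j]
      have ihj := ih h ⟨f, rfl⟩ j hj
      rw [ihj]
      rw [LA' T hT h (-((j+1:ℕ):ℝ)*θ), LA' T hT h (-((j+2:ℕ):ℝ)*θ)]
      rw [pS_congr (-((j+1:ℕ):ℝ)*θ - θ) (-((j+1+1:ℕ):ℝ)*θ) (by push_cast; ring),
        pS_congr (-((j+2:ℕ):ℝ)*θ - θ) (-((j+1+2:ℕ):ℝ)*θ) (by push_cast; ring)]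
      rw [show (j+1+1 : ℕ) = j + 2 from rfl]
      have hpow : (-1:ℂ)^(j+1+1) = -((-1:ℂ)^(j+1)) := by
        rw [pow_succ]
        ring
      rw [hpow]
      ring

end T2

/-- a bounded sequence whose increments tend to `4c` forces `c = 0` -/
lemma c_eq_zero {S : ℕ → ℂ} {c : ℂ} (M : ℝ) (hM : ∀ m, ‖S m‖ ≤ M)
    (hstep : Tendsto (fun m => S (m+1) - S m) atTop (nhds (4*c))) : c = 0 := by
  by_contra hc
  have hr : 0 < ‖c‖ := norm_pos_iff.mpr hc
  obtain ⟨N, hN⟩ := (Metric.tendsto_atTop.mp hstep (2*‖c‖) (by linarith))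
  have grow : ∀ j:ℕ, ‖S (N+j) - S N - (4*c)*(j:ℂ)‖ ≤ 2*‖c‖*j := by
    intro j
    induction j with
    | zero => simp
    | succ j ihj =>
      have hsplit : S (N+(j+1)) - S N - (4*c)*((j+1:ℕ):ℂ)
          = (S (N+j) - S N - (4*c)*(j:ℂ)) + ((S (N+j+1) - S (N+j)) - 4*c) := by
        push_cast
        rw [show N + (j+1) = N + j + 1 by omega]
        ring
      rw [hsplit]
      have h2 := hN (N+j) (by omega)
      rw [dist_eq_norm] at h2
      calc ‖(S (N+j) - S N - (4*c)*(j:ℂ)) + ((S (N+j+1) - S (N+j)) - 4*c)‖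
          ≤ ‖S (N+j) - S N - (4*c)*(j:ℂ)‖ + ‖(S (N+j+1) - S (N+j)) - 4*c‖ := norm_add_le _ _
        _ ≤ 2*‖c‖*j + 2*‖c‖ := add_le_add ihj h2.le
        _ = 2*‖c‖*((j+1:ℕ):ℝ) := by push_cast; ring
  have bound : ∀ j : ℕ, ‖c‖ * j ≤ M := by
    intro j
    have h1 : ‖(4*c)*(j:ℂ)‖ = 4*‖c‖*(j:ℝ) := by
      rw [norm_mul, norm_mul, Complex.norm_natCast]
      simp
    have h4 := norm_sub_norm_le ((4*c)*(j:ℂ)) (S (N+j) - S N)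
    have h5 : ‖(4*c)*(j:ℂ) - (S (N+j) - S N)‖ = ‖S (N+j) - S N - (4*c)*(j:ℂ)‖ :=
      norm_sub_rev _ _
    have h6 : ‖S (N+j) - S N‖ ≤ 2*M := by
      calc ‖S (N+j) - S N‖ ≤ ‖S (N+j)‖ + ‖S N‖ := norm_sub_le _ _
        _ ≤ 2*M := by linarith [hM (N+j), hM N]
    linarith [grow j]
  obtain ⟨j, hj⟩ := exists_nat_gt (M / ‖c‖)
  have hMj : M < ‖c‖ * j := by
    rw [div_lt_iff₀ hr] at hj
    linarith
  linarith [bound j]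

lemma norm_neg_one_pow (n : ℕ) : ‖((-1:ℂ))^n‖ = 1 := by
  rw [norm_pow, norm_neg, norm_one, one_pow]

section T3
variable (T : C(↥Xset, ℂ) →ₗ[ℂ] C(↥Xset, ℂ))
  (hT : ∀ (f : C(↥Xset, ℂ)) (z : ↥Xset),
      T f z = Tfun (fun w : ℂ => if h : w ∈ Xset then f ⟨w, h⟩ else 0) (z : ℂ))

include hT

set_option maxHeartbeats 2000000 in
lemma part1 (g : C(↥Xset, ℂ)) (hg : ∀ n : ℕ, g ∈ LinearMap.range (T ^ (n + 1))) :
    g = 0 := by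
  have hg_eq : ∀ a b : ℝ, a = b → g (pS a) = g (pS b) :=
    fun a b hab => congrArg g (pS_congr a b hab)
  have rel : ∀ k : ℕ, g (pI k) =
      (-1:ℂ)^(k+1)/2 * (g (pS (-((k+1:ℕ):ℝ)*θ)) + g (pS (-((k+2:ℕ):ℝ)*θ))) :=
    fun k => keyP T hT k g (hg k) k le_rfl
  have rel' : ∀ k : ℕ, g (pS (-((k+1:ℕ):ℝ)*θ)) + g (pS (-((k+2:ℕ):ℝ)*θ))
      = 2 * (-1:ℂ)^(k+1) * g (pI k) := by
    intro k
    rw [rel k]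
    rcases Nat.even_or_odd (k+1) with he | ho
    · rw [he.neg_one_pow]; ring
    · rw [ho.neg_one_pow]; ring
  have hM : ∀ z : ↥Xset, ‖g z‖ ≤ ‖g‖ := fun z => g.norm_coe_le_norm z
  have hpI_tend : Tendsto (fun k : ℕ => (pI k : ↥Xset)) atTop (nhds p0) := by
    rw [tendsto_subtype_rng]
    exact seq_tendsto
  have hac : Tendsto (fun k : ℕ => g (pI k)) atTop (nhds (g p0)) :=
    (g.continuous.tendsto p0).comp hpI_tend
  have hstep : ∀ m : ℕ, g (pS (-((2*(m+1)+1:ℕ):ℝ)*θ)) - g (pS (-((2*m+1:ℕ):ℝ)*θ))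
      = 2 * (g (pI (2*m+1)) + g (pI (2*m))) := by
    intro m
    have e1 := rel' (2*m+1)
    have e2 := rel' (2*m)
    have hev : ((-1:ℂ))^(2*m+1+1) = 1 := (by exact ⟨m+1, by ring⟩ : Even (2*m+1+1)).neg_one_pow
    have hod : ((-1:ℂ))^(2*m+1) = -1 := (by exact ⟨m, by ring⟩ : Odd (2*m+1)).neg_one_pow
    rw [hev] at e1
    rw [hod] at e2
    rw [hg_eq (-((2*(m+1)+1:ℕ):ℝ)*θ) (-((2*m+1+2:ℕ):ℝ)*θ) (by push_cast; ring)]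
    rw [hg_eq (-((2*m+1+1:ℕ):ℝ)*θ) (-((2*m+2:ℕ):ℝ)*θ) (by push_cast; ring)] at e1
    linear_combination e1 - e2
  have hinc : Tendsto (fun m : ℕ => g (pS (-((2*(m+1)+1:ℕ):ℝ)*θ)) - g (pS (-((2*m+1:ℕ):ℝ)*θ)))
      atTop (nhds (4 * g p0)) := by
    have hm1 : StrictMono (fun m : ℕ => 2*m+1) := fun a b hab => by dsimp only; omega
    have hm2 : StrictMono (fun m : ℕ => 2*m) := fun a b hab => by dsimp only; omega
    have h1 : Tendsto (fun m : ℕ => g (pI (2*m+1))) atTop (nhds (g p0)) :=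
      hac.comp hm1.tendsto_atTop
    have h2 : Tendsto (fun m : ℕ => g (pI (2*m))) atTop (nhds (g p0)) :=
      hac.comp hm2.tendsto_atTop
    have h3 := ((h1.add h2).const_mul (2:ℂ))
    rw [show (4:ℂ) * g p0 = 2 * (g p0 + g p0) from by ring]
    exact Filter.Tendsto.congr (fun m => (hstep m).symm) h3
  have hc0 : g p0 = 0 := by
    refine c_eq_zero (S := fun m : ℕ => g (pS (-((2*m+1:ℕ):ℝ)*θ))) ‖g‖ (fun m => hM _) ?_
    exact hinc
  rw [hc0] at hac
  -- H ≡ 0 on the circle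
  have hH : ∀ t : ℝ, g (pS t) + g (pS (t - θ)) = 0 := by
    intro t
    set Hf : ℝ → ℂ := fun s => g (pS s) + g (pS (s - θ)) with hHf
    have hcont : Continuous Hf := by
      apply Continuous.add
      · exact g.continuous.comp continuous_pS
      · exact g.continuous.comp (continuous_pS.comp (by fun_prop))
    show Hf t = 0
    by_contra hne
    have hpos : 0 < ‖Hf t‖ := norm_pos_iff.mpr hne
    set ε := ‖Hf t‖ with hε
    obtain ⟨δ, hδ0, hδ⟩ := Metric.continuousAt_iff.mp (hcont.continuousAt (x := t)) (ε/2) (by linarith)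
    obtain ⟨K, hK⟩ := (Metric.tendsto_atTop.mp hac (ε/4) (by linarith))
    have hπ := Real.pi_pos
    obtain ⟨k, hkK, M, hMlt⟩ := dense_orbit (-θ/(2*Real.pi)) irr_alpha1 (K+1)
      (t / (2*Real.pi)) (show 0 < δ/(2*Real.pi) by positivity)
    set s : ℝ := -(k:ℝ)*θ + 2*Real.pi*((-M : ℤ):ℝ) with hsdef
    have hst : |s - t| < δ := by
      have h2 : |(k:ℝ) * (-θ/(2*Real.pi)) - M - t/(2*Real.pi)| * (2*Real.pi) < δ := by
        rw [← lt_div_iff₀ (by positivity : (0:ℝ) < 2*Real.pi)]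
        exact hMlt
      have h4 : ((k:ℝ) * (-θ/(2*Real.pi)) - M - t/(2*Real.pi)) * (2*Real.pi) = s - t := by
        rw [hsdef]
        field_simp
        push_cast
        ring
      have h3 : |(k:ℝ) * (-θ/(2*Real.pi)) - M - t/(2*Real.pi)| * (2*Real.pi)
          = |s - t| := by
        rw [← h4, abs_mul, _root_.abs_of_nonneg (by positivity : (0:ℝ) ≤ 2*Real.pi)]
      rwa [h3] at h2
    have hs1 : pS s = pS (-(k:ℝ)*θ) := by
      rw [hsdef]
      exact pS_per _ (-M)
    have hs2 : pS (s - θ) = pS (-(k:ℝ)*θ - θ) := by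
      rw [show s - θ = (-(k:ℝ)*θ - θ) + 2*Real.pi*((-M : ℤ):ℝ) from by rw [hsdef]; push_cast; ring]
      exact pS_per _ (-M)
    obtain ⟨k', rfl⟩ : ∃ k', k = k' + 1 := ⟨k - 1, by omega⟩
    have hHs : Hf s = 2 * (-1:ℂ)^(k'+1) * g (pI k') := by
      show g (pS s) + g (pS (s - θ)) = _
      rw [hs1, hs2]
      rw [show pS (-((k'+1:ℕ):ℝ)*θ - θ) = pS (-((k'+2:ℕ):ℝ)*θ) from
        pS_congr _ _ (by push_cast; ring)]
      exact rel' k'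
    have hsmall : ‖Hf s‖ < ε/2 := by
      rw [hHs, norm_mul, norm_mul, norm_neg_one_pow]
      have h9 := hK k' (by omega)
      rw [dist_zero_right] at h9
      rw [show ‖(2:ℂ)‖ = 2 from by norm_num]
      linarith
    have hclose : dist (Hf s) (Hf t) < ε/2 := hδ (show dist s t < δ by rwa [Real.dist_eq])
    have h7 := norm_sub_norm_le (Hf t) (Hf s)
    have h8 : ‖Hf t - Hf s‖ < ε/2 := by
      rw [← dist_eq_norm, dist_comm]
      exact hclose
    linarith
  -- constancy on the circle
  have hrot : ∀ s : ℝ, g (pS (s - 2*θ)) = g (pS s) := by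
    intro s
    have h1 := hH s
    have h2 := hH (s - θ)
    rw [hg_eq (s - θ - θ) (s - 2*θ) (by ring)] at h2
    linear_combination h2 - h1
  have hiter : ∀ n : ℕ, g (pS (-((2*n:ℕ):ℝ)*θ)) = g (pS 0) := by
    intro n
    induction n with
    | zero => exact hg_eq _ _ (by push_cast; ring)
    | succ n ihn =>
      rw [hg_eq (-((2*(n+1):ℕ):ℝ)*θ) (-((2*n:ℕ):ℝ)*θ - 2*θ) (by push_cast; ring)]
      rw [hrot]
      exact ihn
  have hconst : ∀ t : ℝ, g (pS t) = g (pS 0) := by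
    intro t
    by_contra hne
    have hpos : 0 < ‖g (pS t) - g (pS 0)‖ := by
      rw [norm_pos_iff, sub_ne_zero]
      exact hne
    set ε := ‖g (pS t) - g (pS 0)‖ with hε
    have hcont : Continuous (fun s : ℝ => g (pS s)) := g.continuous.comp continuous_pS
    obtain ⟨δ, hδ0, hδ⟩ := Metric.continuousAt_iff.mp (hcont.continuousAt (x := t)) (ε/2) (by linarith)
    have hπ := Real.pi_pos
    obtain ⟨k, hkK, M, hMlt⟩ := dense_orbit (-(2*θ)/(2*Real.pi)) irr_alpha2 0
      (t / (2*Real.pi)) (show 0 < δ/(2*Real.pi) by positivity)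
    set s : ℝ := -(k:ℝ)*(2*θ) + 2*Real.pi*((-M : ℤ):ℝ) with hsdef
    have hst : |s - t| < δ := by
      have h2 : |(k:ℝ) * (-(2*θ)/(2*Real.pi)) - M - t/(2*Real.pi)| * (2*Real.pi) < δ := by
        rw [← lt_div_iff₀ (by positivity : (0:ℝ) < 2*Real.pi)]
        exact hMlt
      have h4 : ((k:ℝ) * (-(2*θ)/(2*Real.pi)) - M - t/(2*Real.pi)) * (2*Real.pi) = s - t := by
        rw [hsdef]
        field_simp
        push_cast
        ring
      have h3 : |(k:ℝ) * (-(2*θ)/(2*Real.pi)) - M - t/(2*Real.pi)| * (2*Real.pi)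
          = |s - t| := by
        rw [← h4, abs_mul, _root_.abs_of_nonneg (by positivity : (0:ℝ) ≤ 2*Real.pi)]
      rwa [h3] at h2
    have hs1 : g (pS s) = g (pS 0) := by
      rw [hsdef, pS_per (-(k:ℝ)*(2*θ)) (-M)]
      rw [hg_eq (-(k:ℝ)*(2*θ)) (-((2*k:ℕ):ℝ)*θ) (by push_cast; ring)]
      exact hiter k
    have hclose := hδ (show dist s t < δ by rwa [Real.dist_eq])
    rw [dist_eq_norm, hs1] at hclose
    have h6 : ε = ‖g (pS 0) - g (pS t)‖ := by
      rw [hε]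
      exact (norm_sub_rev _ _).symm
    linarith
  -- the circle value is zero
  have hzero : g (pS 0) = 0 := by
    have h1 := hH 0
    rw [hconst (0 - θ)] at h1
    have h5 : (2:ℂ) * g (pS 0) = 0 := by linear_combination h1
    exact (mul_eq_zero.mp h5).resolve_left (by norm_num)
  have hsphere : ∀ t : ℝ, g (pS t) = 0 := fun t => (hconst t).trans hzero
  have hseq : ∀ k : ℕ, g (pI k) = 0 := by
    intro k
    rw [rel k, hsphere, hsphere]
    ring
  ext z
  show g z = 0
  rcases classify z with ⟨t, rfl⟩ | ⟨k, rfl⟩ | rfl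
  · exact hsphere t
  · exact hseq k
  · exact hc0

end T3

/-! ### Part 3 : isometry -/

instance : Nonempty ↥Xset := ⟨p0⟩

lemma bdd_range_norm (f : C(↥Xset, ℂ)) : BddAbove (Set.range fun z : ↥Xset => ‖f z‖) := by
  refine ⟨‖f‖, ?_⟩
  rintro x ⟨z, rfl⟩
  exact f.norm_coe_le_norm z

section T4
variable (T : C(↥Xset, ℂ) →ₗ[ℂ] C(↥Xset, ℂ))
  (hT : ∀ (f : C(↥Xset, ℂ)) (z : ↥Xset),
      T f z = Tfun (fun w : ℂ => if h : w ∈ Xset then f ⟨w, h⟩ else 0) (z : ℂ))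

include hT

lemma part3 (f : C(↥Xset, ℂ)) : (⨆ z : ↥Xset, ‖T f z‖) = ⨆ z : ↥Xset, ‖f z‖ := by
  have bdd1 := bdd_range_norm f
  have bdd2 := bdd_range_norm (T f)
  apply le_antisymm
  · refine ciSup_le fun z => ?_
    rcases classify z with ⟨t, rfl⟩ | ⟨k, rfl⟩ | rfl
    · rw [LA T hT f t]
      exact le_ciSup bdd1 (pS (t+θ))
    · cases k with
      | zero =>
        rw [LB T hT f]
        have hA : ‖f (pS 0)‖ ≤ ⨆ z : ↥Xset, ‖f z‖ := le_ciSup bdd1 _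
        have hB : ‖f (pS (-θ))‖ ≤ ⨆ z : ↥Xset, ‖f z‖ := le_ciSup bdd1 _
        have h1 : ‖-(f (pS 0) + f (pS (-θ))) / 2‖ = ‖f (pS 0) + f (pS (-θ))‖ / 2 := by
          rw [norm_div, norm_neg, show ‖(2:ℂ)‖ = 2 from by norm_num]
        rw [h1]
        have h2 := norm_add_le (f (pS 0)) (f (pS (-θ)))
        linarith
      | succ j =>
        rw [LC T hT f j, norm_neg]
        exact le_ciSup bdd1 _
    · rw [LD T hT f, norm_neg]
      exact le_ciSup bdd1 _
  · refine ciSup_le fun z => ?_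
    rcases classify z with ⟨t, rfl⟩ | ⟨k, rfl⟩ | rfl
    · rw [LA' T hT f t]
      exact le_ciSup bdd2 _
    · have h1 : ‖f (pI k)‖ = ‖T f (pI (k+1))‖ := by rw [LC T hT f k, norm_neg]
      rw [h1]
      exact le_ciSup bdd2 _
    · have h1 : ‖f p0‖ = ‖T f p0‖ := by rw [LD T hT f, norm_neg]
      rw [h1]
      exact le_ciSup bdd2 _

end T4

/-! ### Part 4 : codimension one -/

noncomputable def phi : C(↥Xset, ℂ) →ₗ[ℂ] ℂ where
  toFun g := g (pI 0) + (g (pS (-θ)) + g (pS (-(2*θ))))/2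
  map_add' g h := by
    simp only [ContinuousMap.add_apply]
    ring
  map_smul' c g := by
    simp only [ContinuousMap.smul_apply, smul_eq_mul, RingHom.id_apply]
    ring

noncomputable def Gf (g : C(↥Xset, ℂ)) : ℂ → ℂ :=
  fun w => if h : w ∈ Xset then g ⟨w, h⟩ else 0

lemma Gf_contOn (g : C(↥Xset, ℂ)) : ContinuousOn (Gf g) Xset := by
  rw [continuousOn_iff_continuous_restrict]
  have : Xset.restrict (Gf g) = fun z : ↥Xset => g z := by
    funext z
    exact dif_pos z.2
  change Continuous (Xset.restrict (Gf g))
  rw [this]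
  exact g.continuous

lemma Gf_eq (g : C(↥Xset, ℂ)) {w : ℂ} (hw : w ∈ Xset) : Gf g w = g ⟨w, hw⟩ :=
  dif_pos hw

noncomputable def Ffun (g : C(↥Xset, ℂ)) : ℂ → ℂ := fun w =>
  if 1/2 < ‖w‖ then Gf g (w * e (-θ)) else -Gf g (w * (1+w)⁻¹)

lemma abs_inv_le_half {n : ℕ} (hn : 2 ≤ n) : ‖((n:ℂ))⁻¹‖ ≤ 1/2 := by
  rw [abs_inv_nat]
  have h2 : (2:ℝ) ≤ n := by exact_mod_cast hn
  rw [inv_le_comm₀ (by linarith) (by norm_num)]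
  linarith

lemma mem_notSphere_abs {z : ℂ} (hz : z ∈ Xset) (h : ¬ (1/2 < ‖z‖)) :
    z = 0 ∨ ∃ n : ℕ, 2 ≤ n ∧ z = ((n:ℂ))⁻¹ := by
  rcases hz with (hs | ⟨n, hn2, rfl⟩) | h0
  · rw [mem_sphere_iff] at hs
    rw [hs] at h
    norm_num at h
  · exact Or.inr ⟨n, hn2, rfl⟩
  · exact Or.inl h0

lemma Ffun_sphere (g : C(↥Xset, ℂ)) (t : ℝ) : Ffun g (e t) = g (pS (t - θ)) := by
  unfold Ffun
  rw [if_pos (by rw [abs_e]; norm_num)]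
  rw [show e t * e (-θ) = e (t - θ) from by rw [← e_add]; exact congrArg e (by ring)]
  exact Gf_eq g (e_mem_Xset (t - θ))

lemma psi_val (k : ℕ) : ((((k+2:ℕ)):ℂ))⁻¹ * (1 + ((((k+2:ℕ)):ℂ))⁻¹)⁻¹
    = ((((k+3:ℕ)):ℂ))⁻¹ := by
  have h2 : (((k+2:ℕ)):ℂ) ≠ 0 := by
    exact_mod_cast (by omega : (k+2:ℕ) ≠ 0)
  rw [← mul_inv]
  congr 1
  rw [mul_add, mul_one, mul_inv_cancel₀ h2]
  push_cast
  ring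

lemma Ffun_seq (g : C(↥Xset, ℂ)) (k : ℕ) :
    Ffun g ((((k+2:ℕ)):ℂ)⁻¹) = -g (pI (k+1)) := by
  unfold Ffun
  rw [if_neg (by rw [not_lt]; exact abs_inv_le_half (by omega))]
  rw [psi_val k]
  rw [Gf_eq g (inv_mem_Xset (by omega : 2 ≤ k+3))]
  rfl

lemma Ffun_zero (g : C(↥Xset, ℂ)) : Ffun g 0 = -g p0 := by
  unfold Ffun
  rw [if_neg (by simp)]
  rw [show (0:ℂ) * (1+0)⁻¹ = 0 from by ring]
  rw [Gf_eq g zero_mem_Xset]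
  rfl


lemma Xset_inter_O1 : Xset ∩ {w : ℂ | 1/2 < ‖w‖} = Metric.sphere (0:ℂ) 1 := by
  ext z
  constructor
  · rintro ⟨hz, hgt⟩
    rcases hz with (hs | ⟨n, hn2, rfl⟩) | h0
    · exact hs
    · exact absurd (abs_inv_le_half hn2) (by rw [Set.mem_setOf_eq] at hgt; linarith)
    · rw [Set.mem_singleton_iff] at h0
      rw [h0] at hgt
      simp at hgt
      linarith
  · intro hs
    refine ⟨sphere_mem_Xset hs, ?_⟩
    rw [Set.mem_setOf_eq, (mem_sphere_iff z).mp hs]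
    norm_num

lemma Xset_inter_O2 : Xset ∩ {w : ℂ | ‖w‖ < 3/4}
    = {z : ℂ | ∃ n : ℕ, 2 ≤ n ∧ z = ((n:ℂ))⁻¹} ∪ {0} := by
  ext z
  constructor
  · rintro ⟨hz, hlt⟩
    rcases hz with (hs | hseq) | h0
    · rw [mem_sphere_iff] at hs
      rw [Set.mem_setOf_eq, hs] at hlt
      norm_num at hlt
    · exact Or.inl hseq
    · exact Or.inr h0
  · rintro (⟨n, hn2, rfl⟩ | h0)
    · refine ⟨inv_mem_Xset hn2, ?_⟩
      rw [Set.mem_setOf_eq]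
      have := abs_inv_le_half hn2
      linarith
    · rw [Set.mem_singleton_iff] at h0
      subst h0
      refine ⟨zero_mem_Xset, ?_⟩
      simp

lemma one_add_ne {w : ℂ} (hw : w ∈ {z : ℂ | ∃ n : ℕ, 2 ≤ n ∧ z = ((n:ℂ))⁻¹} ∪ {0}) :
    1 + w ≠ 0 := by
  rcases hw with ⟨n, hn2, rfl⟩ | h0
  · intro h
    have h1 : ((n:ℂ))⁻¹ = -1 := by linear_combination h
    have h2 := congrArg (‖·‖) h1
    rw [abs_inv_nat] at h2
    simp at h2
    omega
  · rw [Set.mem_singleton_iff] at h0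
    subst h0
    norm_num

lemma psi_maps {w : ℂ} (hw : w ∈ {z : ℂ | ∃ n : ℕ, 2 ≤ n ∧ z = ((n:ℂ))⁻¹} ∪ {0}) :
    w * (1+w)⁻¹ ∈ Xset := by
  rcases hw with ⟨n, hn2, rfl⟩ | h0
  · obtain ⟨k, rfl⟩ : ∃ k, n = k + 2 := ⟨n - 2, by omega⟩
    rw [psi_val k]
    exact inv_mem_Xset (by omega)
  · rw [Set.mem_singleton_iff] at h0
    subst h0
    rw [show (0:ℂ) * (1+0)⁻¹ = 0 from by ring]
    exact zero_mem_Xset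

lemma FcontOn (g : C(↥Xset, ℂ)) : ContinuousOn (Ffun g) Xset := by
  intro x hx
  by_cases hbig : 1/2 < ‖x‖
  · have hO : {w : ℂ | 1/2 < ‖w‖} ∈ nhds x :=
      (isOpen_lt continuous_const continuous_norm).mem_nhds hbig
    rw [← continuousWithinAt_inter hO, Xset_inter_O1]
    have hxs : x ∈ Metric.sphere (0:ℂ) 1 := Xset_inter_O1 ▸ ⟨hx, hbig⟩
    have hbase : ContinuousOn (fun w => Gf g (w * e (-θ))) (Metric.sphere (0:ℂ) 1) := by
      apply (Gf_contOn g).comp ((continuous_mul_right _).continuousOn)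
      intro w hw
      apply sphere_mem_Xset
      rw [mem_sphere_iff] at hw ⊢
      rw [norm_mul, hw, abs_e, one_mul]
    refine (hbase x hxs).congr ?_ ?_
    · intro w hw
      have hw2 : 1/2 < ‖w‖ := by rw [(mem_sphere_iff w).mp hw]; norm_num
      exact if_pos hw2
    · exact if_pos hbig
  · have hsmall : ‖x‖ < 3/4 := by
      rw [not_lt] at hbig
      linarith
    have hO : {w : ℂ | ‖w‖ < 3/4} ∈ nhds x :=
      (isOpen_lt continuous_norm continuous_const).mem_nhds hsmall
    rw [← continuousWithinAt_inter hO, Xset_inter_O2]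
    have hxs : x ∈ {z : ℂ | ∃ n : ℕ, 2 ≤ n ∧ z = ((n:ℂ))⁻¹} ∪ {0} :=
      Xset_inter_O2 ▸ ⟨hx, hsmall⟩
    have hψ : ContinuousOn (fun w : ℂ => w * (1+w)⁻¹)
        ({z : ℂ | ∃ n : ℕ, 2 ≤ n ∧ z = ((n:ℂ))⁻¹} ∪ {0}) := by
      apply ContinuousOn.mul continuousOn_id
      apply ContinuousOn.inv₀
      · exact (continuous_const.add continuous_id).continuousOn
      · exact fun w hw => one_add_ne hw
    have hbase : ContinuousOn (fun w => -Gf g (w * (1+w)⁻¹))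
        ({z : ℂ | ∃ n : ℕ, 2 ≤ n ∧ z = ((n:ℂ))⁻¹} ∪ {0}) :=
      ((Gf_contOn g).comp hψ (fun w hw => psi_maps hw)).neg
    refine (hbase x hxs).congr ?_ ?_
    · intro w hw
      have hw2 : ¬ (1/2 < ‖w‖) := by
        rw [not_lt]
        rcases hw with ⟨n, hn2, rfl⟩ | h0
        · exact abs_inv_le_half hn2
        · rw [Set.mem_singleton_iff] at h0
          subst h0
          simp
      exact if_neg hw2
    · exact if_neg hbig

noncomputable def pre (g : C(↥Xset, ℂ)) : C(↥Xset, ℂ) :=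
  ⟨Xset.restrict (Ffun g), (FcontOn g).restrict⟩

section T5
variable (T : C(↥Xset, ℂ) →ₗ[ℂ] C(↥Xset, ℂ))
  (hT : ∀ (f : C(↥Xset, ℂ)) (z : ↥Xset),
      T f z = Tfun (fun w : ℂ => if h : w ∈ Xset then f ⟨w, h⟩ else 0) (z : ℂ))

include hT

lemma Tpre (g : C(↥Xset, ℂ)) (hphi : phi g = 0) : T (pre g) = g := by
  ext z
  rcases classify z with ⟨t, rfl⟩ | ⟨k, rfl⟩ | rfl
  · rw [LA T hT (pre g) t]
    show Ffun g (e (t+θ)) = g (pS t)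
    rw [Ffun_sphere]
    exact congrArg g (pS_congr _ _ (by ring))
  · cases k with
    | zero =>
      rw [LB T hT (pre g)]
      have h1 : pre g (pS 0) = g (pS (0-θ)) := Ffun_sphere g 0
      have h2 : pre g (pS (-θ)) = g (pS (-θ-θ)) := Ffun_sphere g (-θ)
      rw [h1, h2]
      have hp : g (pI 0) + (g (pS (-θ)) + g (pS (-(2*θ))))/2 = 0 := hphi
      rw [pS_congr (0-θ) (-θ) (by ring), pS_congr (-θ-θ) (-(2*θ)) (by ring)]
      linear_combination -hp
    | succ j =>
      rw [LC T hT (pre g) j]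
      show -(Ffun g ((((j+2:ℕ)):ℂ)⁻¹)) = g (pI (j+1))
      rw [Ffun_seq]
      ring
  · rw [LD T hT (pre g)]
    show -(Ffun g 0) = g p0
    rw [Ffun_zero]
    ring

lemma range_eq : LinearMap.range T = LinearMap.ker phi := by
  apply le_antisymm
  · rintro g ⟨f, rfl⟩
    rw [LinearMap.mem_ker]
    show (T f) (pI 0) + ((T f) (pS (-θ)) + (T f) (pS (-(2*θ))))/2 = 0
    rw [LB T hT f, LA T hT f (-θ), LA T hT f (-(2*θ))]
    rw [pS_congr (-θ+θ) 0 (by ring), pS_congr (-(2*θ)+θ) (-θ) (by ring)]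
    ring
  · intro g hg
    exact ⟨pre g, Tpre T hT g (LinearMap.mem_ker.mp hg)⟩

end T5

noncomputable def chiF : ℂ → ℂ := fun w => if w = ((2:ℂ))⁻¹ then 1 else 0

lemma near_half {w : ℂ} (hw : w ∈ Xset) (hd : ‖(w - ((2:ℂ))⁻¹)‖ < 1/10) :
    w = ((2:ℂ))⁻¹ := by
  rcases hw with (hs | ⟨n, hn2, rfl⟩) | h0
  · exfalso
    rw [mem_sphere_iff] at hs
    have habs2 : ‖(((2:ℂ))⁻¹)‖ = 2⁻¹ := by rw [norm_inv, Complex.norm_two]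
    have h1 : ‖w‖ ≤ ‖(w - ((2:ℂ))⁻¹)‖ + ‖(((2:ℂ))⁻¹)‖ := by
      calc ‖w‖ = ‖((w - ((2:ℂ))⁻¹) + ((2:ℂ))⁻¹)‖ :=
            congrArg (‖·‖) (by ring)
        _ ≤ _ := norm_add_le _ _
    rw [hs, habs2] at h1
    norm_num at h1
    linarith
  · rcases Nat.eq_or_lt_of_le hn2 with h2 | h3
    · rw [← h2]
      norm_num
    · exfalso
      have hn3 : 3 ≤ n := h3
      have hr : ((n:ℂ))⁻¹ - ((2:ℂ))⁻¹ = ((((n:ℝ))⁻¹ - ((2:ℝ))⁻¹ : ℝ) : ℂ) := by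
        push_cast
        ring
      rw [hr, Complex.norm_real, Real.norm_eq_abs] at hd
      have h4 : ((n:ℝ))⁻¹ ≤ 1/3 := by
        rw [inv_le_comm₀ (by positivity : (0:ℝ) < (n:ℝ)) (by norm_num),
          show ((1:ℝ)/3)⁻¹ = 3 from by norm_num]
        exact_mod_cast hn3
      have h5 : (0:ℝ) ≤ (n:ℝ)⁻¹ := by positivity
      rw [abs_sub_comm, _root_.abs_of_nonneg (by norm_num; linarith)] at hd
      linarith
  · exfalso
    rw [Set.mem_singleton_iff] at h0
    subst h0
    rw [zero_sub, norm_neg, norm_inv, Complex.norm_two] at hd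
    norm_num at hd

lemma chi_contOn : ContinuousOn chiF Xset := by
  intro x hx
  by_cases hx2 : x = ((2:ℂ))⁻¹
  · subst hx2
    have hO : Metric.ball (((2:ℂ))⁻¹) (1/10) ∈ nhds (((2:ℂ))⁻¹) :=
      Metric.ball_mem_nhds _ (by norm_num)
    rw [← continuousWithinAt_inter hO]
    refine (continuousWithinAt_const (b := (1:ℂ))).congr ?_ ?_
    · intro w hw
      refine if_pos (near_half hw.1 ?_)
      have := hw.2
      rw [Metric.mem_ball, Complex.dist_eq] at this
      exact this
    · exact if_pos rfl
  · have hO : {w : ℂ | w ≠ ((2:ℂ))⁻¹} ∈ nhds x := isOpen_ne.mem_nhds hx2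
    rw [← continuousWithinAt_inter hO]
    refine (continuousWithinAt_const (b := (0:ℂ))).congr ?_ ?_
    · intro w hw
      exact if_neg hw.2
    · exact if_neg hx2

noncomputable def chi : C(↥Xset, ℂ) := ⟨Xset.restrict chiF, chi_contOn.restrict⟩

lemma phi_chi : phi chi = 1 := by
  show chi (pI 0) + (chi (pS (-θ)) + chi (pS (-(2*θ))))/2 = 1
  have h1 : chi (pI 0) = 1 := by
    show chiF ((((0+2:ℕ)):ℂ)⁻¹) = 1
    unfold chiF
    rw [if_pos (by norm_num)]
  have h2 : ∀ t : ℝ, chi (pS t) = 0 := by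
    intro t
    show chiF (e t) = 0
    unfold chiF
    rw [if_neg (e_ne_half t)]
  rw [h1, h2, h2]
  norm_num

lemma phi_surj : Function.Surjective phi := by
  intro c
  refine ⟨c • chi, ?_⟩
  rw [map_smul, phi_chi, smul_eq_mul, mul_one]

section T6
variable (T : C(↥Xset, ℂ) →ₗ[ℂ] C(↥Xset, ℂ))
  (hT : ∀ (f : C(↥Xset, ℂ)) (z : ↥Xset),
      T f z = Tfun (fun w : ℂ => if h : w ∈ Xset then f ⟨w, h⟩ else 0) (z : ℂ))

include hT

lemma part4 : Module.rank ℂ (C(↥Xset, ℂ) ⧸ LinearMap.range T) = 1 := by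
  rw [range_eq T hT]
  rw [(LinearMap.quotKerEquivRange phi).rank_eq]
  rw [LinearMap.range_eq_top.mpr phi_surj]
  rw [rank_top, Module.rank_self]

end T6

end StmtAux

/-- For the operator `T` of the example, any `g ∈ ⋂ₙ Tⁿ(C(X))` vanishes; hence `T` is an
isometric shift (it preserves the sup norm, its range has codimension 1, and the
iterated ranges intersect trivially). -/
theorem stmt_12 (T : C(↥Xset, ℂ) →ₗ[ℂ] C(↥Xset, ℂ))
    (hT : ∀ (f : C(↥Xset, ℂ)) (z : ↥Xset),
      T f z = Tfun (fun w : ℂ => if h : w ∈ Xset then f ⟨w, h⟩ else 0) (z : ℂ)) :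
    (∀ g : C(↥Xset, ℂ), (∀ n : ℕ, g ∈ LinearMap.range (T ^ (n + 1))) → g = 0) ∧
    (⨅ n : ℕ, LinearMap.range (T ^ (n + 1))) = ⊥ ∧
    (∀ f : C(↥Xset, ℂ), (⨆ z : ↥Xset, ‖T f z‖) = ⨆ z : ↥Xset, ‖f z‖) ∧
    Module.rank ℂ (C(↥Xset, ℂ) ⧸ LinearMap.range T) = 1 := by
  refine ⟨fun g hg => StmtAux.part1 T hT g hg, ?_, fun f => StmtAux.part3 T hT f,
    StmtAux.part4 T hT⟩
  rw [eq_bot_iff]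
  intro g hg
  rw [Submodule.mem_bot]
  exact StmtAux.part1 T hT g (fun n => (Submodule.mem_iInf _).mp hg n)
end
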